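/- arXiv:cond-mat/0308379 — 12 statements merged into one kernel-verified Lean document; each statement's English description precedes it below -/
import Mathlib

section
/- Two-sided Peierls–Bogoliubov inequality: for any Hermitian n×n complex matrices A and B, one has Tr[exp(−A)·(A−B)] / Tr[exp(−A)] ≤ ln Tr[exp(−B)] − ln Tr[exp(−A)] ≤ Tr[exp(−B)·(A−B)] / Tr[exp(−B)], where all the traces appearing are (positive, respectively real) real numbers. -/
/-! Diagonalise `A = ∑ aᵢ uᵢ uᵢᴴ` and let `tᵢ = ⟨uᵢ, B uᵢ⟩`, so that
`Tr[e^{-A}(A - B)] = ∑ e^{-aᵢ} (aᵢ - tᵢ)`. The tangent line `1 + x ≤ eˣ` bounds this, divided by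
`Z_A = ∑ e^{-aᵢ}`, by `log ∑ e^{-tᵢ} - log Z_A`. Jensen's inequality for the convex function
`x ↦ e^{-x}` and the probability weights `|⟨vⱼ, uᵢ⟩|²` (`vⱼ` the eigenvectors of `B`) gives
`e^{-tᵢ} ≤ ⟨uᵢ, e^{-B} uᵢ⟩`, hence `∑ e^{-tᵢ} ≤ Tr e^{-B}`. This is the left inequality; the right
one is the left one with `A` and `B` exchanged. -/

open Matrix NormedSpace

lemma Real.sum_exp_neg_mul_sub_div_le_log_sub_log {ι : Type*} [Fintype ι] [Nonempty ι]
    (a t : ι → ℝ) :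
    (∑ i, Real.exp (-a i) * (a i - t i)) / ∑ i, Real.exp (-a i) ≤
      Real.log (∑ i, Real.exp (-t i)) - Real.log (∑ i, Real.exp (-a i)) := by
  set Za := ∑ i, Real.exp (-a i)
  set Zt := ∑ i, Real.exp (-t i)
  set c := Real.log Zt - Real.log Za
  have hZa : 0 < Za := Finset.sum_pos (fun i _ => Real.exp_pos _) Finset.univ_nonempty
  have hZt : 0 < Zt := Finset.sum_pos (fun i _ => Real.exp_pos _) Finset.univ_nonempty
  have hc : Real.exp (-c) = Za / Zt := by
    rw [neg_sub, Real.exp_sub, Real.exp_log hZa, Real.exp_log hZt]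
  -- the tangent line `x + 1 ≤ exp x` at `x = a i - t i - c`, weighted by `exp (-a i)`
  have tangent : ∀ i, Real.exp (-a i) * (a i - t i) + Real.exp (-a i) * (1 - c) ≤
      Real.exp (-t i) * Real.exp (-c) := fun i => by
    calc _ = Real.exp (-a i) * (a i - t i - c + 1) := by ring
      _ ≤ Real.exp (-a i) * Real.exp (a i - t i - c) :=
        mul_le_mul_of_nonneg_left (Real.add_one_le_exp _) (Real.exp_pos _).le
      _ = _ := by rw [← Real.exp_add, ← Real.exp_add]; ring_nf
  have summed := Finset.sum_le_sum fun i (_ : i ∈ Finset.univ) => tangent i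
  rw [Finset.sum_add_distrib, ← Finset.sum_mul, ← Finset.sum_mul, hc,
    mul_div_cancel₀ _ hZt.ne'] at summed
  rw [div_le_iff₀ hZa]
  linarith

namespace Matrix

variable {m n 𝕜 : Type*} [RCLike 𝕜]

lemma trace_mul_diagonal_mul_mul {R : Type*} [CommSemiring R] [Fintype n] [DecidableEq n]
    (U V C : Matrix n n R) (d : n → R) :
    trace (U * diagonal d * V * C) = ∑ i, d i * (V * C * U) i i := by
  calc trace (U * diagonal d * V * C) = trace (U * (diagonal d * V * C)) := by
        simp only [Matrix.mul_assoc]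
    _ = trace (diagonal d * (V * C * U)) := by
        rw [trace_mul_comm]; simp only [Matrix.mul_assoc]
    _ = ∑ i, d i * (V * C * U) i i := by simp [trace, diagonal_mul]

lemma conjTranspose_mul_diagonal_mul_apply_self [Fintype m] [DecidableEq m] (W : Matrix m n 𝕜)
    (d : m → ℝ) (i : n) :
    (Wᴴ * diagonal (fun j => (d j : 𝕜)) * W) i i = ((∑ j, d j * ‖W j i‖ ^ 2 : ℝ) : 𝕜) := by
  rw [mul_apply]
  simp only [mul_diagonal, conjTranspose_apply, RCLike.star_def]
  push_cast
  refine Finset.sum_congr rfl fun j _ => ?_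
  rw [← RCLike.conj_mul]
  ring

lemma sum_norm_sq_apply_eq_one_of_mem_unitary [Fintype n] [DecidableEq n] {W : Matrix n n 𝕜}
    (hW : W ∈ unitary (Matrix n n 𝕜)) (i : n) :
    ∑ j, ‖W j i‖ ^ 2 = 1 := by
  have h := conjTranspose_mul_diagonal_mul_apply_self W 1 i
  simp only [Pi.one_apply, RCLike.ofReal_one, diagonal_one, Matrix.mul_one, one_mul,
    ← star_eq_conjTranspose, Unitary.star_mul_self_of_mem hW, one_apply_eq] at h
  exact_mod_cast h.symm

lemma exp_unitary_conj [Fintype n] [DecidableEq n] (U : unitary (Matrix n n 𝕜))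
    (X : Matrix n n 𝕜) :
    exp ((U : Matrix n n 𝕜) * X * star (U : Matrix n n 𝕜)) =
      U * exp X * star (U : Matrix n n 𝕜) := by
  simpa using exp_units_conj (Unitary.toUnits U) X

namespace IsHermitian

variable [Fintype n] [DecidableEq n] {A : Matrix n n 𝕜} (hA : A.IsHermitian)
include hA

lemma cfc_id_eq : hA.cfc id = A := hA.spectral_theorem.symm

lemma exp_cfc (f : ℝ → ℝ) : NormedSpace.exp (hA.cfc f) = hA.cfc (fun x => Real.exp (f x)) := by
  simp only [IsHermitian.cfc, Unitary.conjStarAlgAut_apply, exp_unitary_conj, exp_diagonal]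
  congr
  funext i
  simp [Real.exp_eq_exp_ℝ, ← algebraMap_exp_comm]

lemma exp_neg_eq_cfc : NormedSpace.exp (-A) = hA.cfc (fun x => Real.exp (-x)) := by
  rw [← cfc_neg_id (R := ℝ) A hA.isSelfAdjoint, hA.cfc_eq, exp_cfc]

lemma trace_cfc_mul (f : ℝ → ℝ) (C : Matrix n n 𝕜) :
    trace (hA.cfc f * C) = ∑ i, (f (hA.eigenvalues i) : 𝕜) *
      (star (hA.eigenvectorUnitary : Matrix n n 𝕜) * C * hA.eigenvectorUnitary) i i := by
  simp only [IsHermitian.cfc, Unitary.conjStarAlgAut_apply]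
  exact trace_mul_diagonal_mul_mul _ _ _ _

lemma trace_cfc (f : ℝ → ℝ) : trace (hA.cfc f) = ((∑ i, f (hA.eigenvalues i) : ℝ) : 𝕜) := by
  simpa using hA.trace_cfc_mul f 1

lemma diag_conj_cfc (f : ℝ → ℝ) (U : Matrix n n 𝕜) (i : n) :
    (star U * hA.cfc f * U) i i = ((∑ j, f (hA.eigenvalues j) *
      ‖(star (hA.eigenvectorUnitary : Matrix n n 𝕜) * U) j i‖ ^ 2 : ℝ) : 𝕜) := by
  rw [← conjTranspose_mul_diagonal_mul_apply_self]
  simp [IsHermitian.cfc, star_eq_conjTranspose, conjTranspose_mul, Matrix.mul_assoc,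
    Function.comp_def]

lemma map_re_diag_conj_le_re_diag_conj_cfc {f : ℝ → ℝ} (hf : ConvexOn ℝ Set.univ f)
    {U : Matrix n n 𝕜} (hU : U ∈ unitary (Matrix n n 𝕜)) (i : n) :
    f (RCLike.re ((star U * A * U) i i)) ≤ RCLike.re ((star U * hA.cfc f * U) i i) := by
  conv_lhs => rw [← hA.cfc_id_eq]
  rw [diag_conj_cfc, diag_conj_cfc, RCLike.ofReal_re, RCLike.ofReal_re]
  have hW : star (hA.eigenvectorUnitary : Matrix n n 𝕜) * U ∈ unitary (Matrix n n 𝕜) :=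
    mul_mem (Unitary.star_mem hA.eigenvectorUnitary.2) hU
  simpa [smul_eq_mul, mul_comm] using hf.map_sum_le (t := Finset.univ)
    (w := fun j => ‖(star (hA.eigenvectorUnitary : Matrix n n 𝕜) * U) j i‖ ^ 2)
    (p := hA.eigenvalues) (fun _ _ => by positivity)
    (sum_norm_sq_apply_eq_one_of_mem_unitary hW i) (fun _ _ => Set.mem_univ _)

lemma sum_map_re_diag_conj_le_re_trace_cfc {f : ℝ → ℝ} (hf : ConvexOn ℝ Set.univ f)
    {U : Matrix n n 𝕜} (hU : U ∈ unitary (Matrix n n 𝕜)) :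
    ∑ i, f (RCLike.re ((star U * A * U) i i)) ≤ RCLike.re (trace (hA.cfc f)) := by
  have htrace : trace (star U * hA.cfc f * U) = trace (hA.cfc f) := by
    rw [trace_mul_cycle, Unitary.mul_star_self_of_mem hU, Matrix.one_mul]
  calc _ ≤ ∑ i, RCLike.re ((star U * hA.cfc f * U) i i) :=
        Finset.sum_le_sum fun i _ => hA.map_re_diag_conj_le_re_diag_conj_cfc hf hU i
    _ = _ := by rw [← htrace, trace, map_sum]; rfl

lemma trace_exp_neg : trace (NormedSpace.exp (-A)) =
    ((∑ i, Real.exp (-hA.eigenvalues i) : ℝ) : 𝕜) := by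
  rw [hA.exp_neg_eq_cfc, hA.trace_cfc]

lemma re_trace_exp_neg_pos [Nonempty n] : 0 < RCLike.re (trace (NormedSpace.exp (-A))) := by
  rw [hA.trace_exp_neg, RCLike.ofReal_re]
  exact Finset.sum_pos (fun i _ => Real.exp_pos _) Finset.univ_nonempty

lemma re_trace_exp_neg_mul_sub_div_le [Nonempty n] {B : Matrix n n 𝕜} (hB : B.IsHermitian) :
    RCLike.re (trace (NormedSpace.exp (-A) * (A - B))) /
        RCLike.re (trace (NormedSpace.exp (-A))) ≤
      Real.log (RCLike.re (trace (NormedSpace.exp (-B)))) -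
        Real.log (RCLike.re (trace (NormedSpace.exp (-A)))) := by
  set V : Matrix n n 𝕜 := (hA.eigenvectorUnitary : Matrix n n 𝕜)
  set a := hA.eigenvalues
  set t : n → ℝ := fun i => RCLike.re ((star V * B * V) i i)
  have hdiag : star V * A * V = diagonal (RCLike.ofReal ∘ a) :=
    (Unitary.conjStarAlgAut_star_apply _ _).symm.trans hA.conjStarAlgAut_star_eigenvectorUnitary
  have hZ : RCLike.re (trace (NormedSpace.exp (-A))) = ∑ i, Real.exp (-a i) := by
    rw [hA.trace_exp_neg, RCLike.ofReal_re]
  have hnum : RCLike.re (trace (NormedSpace.exp (-A) * (A - B))) =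
      ∑ i, Real.exp (-a i) * (a i - t i) := by
    rw [hA.exp_neg_eq_cfc, hA.trace_cfc_mul, map_sum]
    refine Finset.sum_congr rfl fun i _ => ?_
    rw [mul_sub, sub_mul, sub_apply, hdiag, diagonal_apply_eq, RCLike.re_ofReal_mul, map_sub,
      Function.comp_apply, RCLike.ofReal_re]
  have hexp_neg : ConvexOn ℝ Set.univ (fun x : ℝ => Real.exp (-x)) := by
    simpa [Function.comp_def] using convexOn_exp.comp_linearMap (-LinearMap.id)
  have hpeierls : ∑ i, Real.exp (-t i) ≤ RCLike.re (trace (NormedSpace.exp (-B))) := by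
    rw [hB.exp_neg_eq_cfc]
    exact hB.sum_map_re_diag_conj_le_re_trace_cfc hexp_neg hA.eigenvectorUnitary.2
  calc _ = (∑ i, Real.exp (-a i) * (a i - t i)) / ∑ i, Real.exp (-a i) := by rw [hnum, hZ]
    _ ≤ Real.log (∑ i, Real.exp (-t i)) - Real.log (∑ i, Real.exp (-a i)) :=
      Real.sum_exp_neg_mul_sub_div_le_log_sub_log a t
    _ ≤ _ := by
      rw [hZ]
      gcongr

end IsHermitian

lemma IsHermitian.im_trace_mul_eq_zero [Fintype n] {X Y : Matrix n n 𝕜} (hX : X.IsHermitian)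
    (hY : Y.IsHermitian) : RCLike.im (trace (X * Y)) = 0 := by
  rw [← RCLike.conj_eq_iff_im, ← RCLike.star_def, ← trace_conjTranspose, conjTranspose_mul,
    hX.eq, hY.eq, trace_mul_comm]

end Matrix

/-- Two-sided Peierls–Bogoliubov inequality for Hermitian matrices. -/
theorem peierls_bogoliubov_two_sided
    {n : Type*} [Fintype n] [DecidableEq n] [Nonempty n]
    (A B : Matrix n n ℂ) (hA : Aᴴ = A) (hB : Bᴴ = B) :
    0 < (trace (exp (-A))).re ∧
    0 < (trace (exp (-B))).re ∧
    (trace (exp (-A))).im = 0 ∧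
    (trace (exp (-B))).im = 0 ∧
    (trace (exp (-A) * (A - B))).im = 0 ∧
    (trace (exp (-B) * (A - B))).im = 0 ∧
    (trace (exp (-A) * (A - B))).re / (trace (exp (-A))).re ≤
      Real.log (trace (exp (-B))).re - Real.log (trace (exp (-A))).re ∧
    Real.log (trace (exp (-B))).re - Real.log (trace (exp (-A))).re ≤
      (trace (exp (-B) * (A - B))).re / (trace (exp (-B))).re := by
  have hA' : A.IsHermitian := hA
  have hB' : B.IsHermitian := hB
  have hAB : (A - B).IsHermitian := hA'.sub hB'
  have lower := hA'.re_trace_exp_neg_mul_sub_div_le hB'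
  have upper := hB'.re_trace_exp_neg_mul_sub_div_le hA'
  rw [← neg_sub A B, mul_neg, trace_neg, map_neg, neg_div] at upper
  simp only [RCLike.re_to_complex] at lower upper
  refine ⟨hA'.re_trace_exp_neg_pos, hB'.re_trace_exp_neg_pos, ?_, ?_,
    hA'.neg.exp.im_trace_mul_eq_zero hAB, hB'.neg.exp.im_trace_mul_eq_zero hAB, lower, by linarith⟩
  · rw [← RCLike.im_to_complex, hA'.trace_exp_neg, RCLike.ofReal_im]
  · rw [← RCLike.im_to_complex, hB'.trace_exp_neg, RCLike.ofReal_im]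
end

section
/- Strict Peierls–Bogoliubov inequality: for Hermitian n×n complex matrices A and B such that A − B is not a real scalar multiple of the identity matrix, both inequalities are strict: Tr[exp(−A)·(A−B)] / Tr[exp(−A)] < ln Tr[exp(−B)] − ln Tr[exp(−A)] < Tr[exp(−B)·(A−B)] / Tr[exp(−B)]. -/
/-!
Both inequalities are instances of
`Tr(e^H C) / Tr e^H < log Tr e^(H + C) - log Tr e^H` for Hermitian `H` and a Hermitian `C` that
is not a real multiple of the identity: take `H = -A, C = A - B`, and `H = -B, C = B - A`.
Conjugating by the eigenvector unitary of `H` reduces this to `H = diag d`, where it splits as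

* `Σᵢ e^(dᵢ) cᵢ / Σᵢ e^(dᵢ) ≤ log Σᵢ e^(dᵢ + cᵢ) - log Σᵢ e^(dᵢ)` with `cᵢ = Cᵢᵢ`: Jensen for `exp`
  with the Gibbs weights `e^(dᵢ) / Σⱼ e^(dⱼ)`, strict unless `c` is constant;
* Peierls' inequality `Σᵢ e^(Mᵢᵢ) ≤ Tr e^M` for `M = H + C`: if `M = U diag μ U*`, then
  `Mᵢᵢ` and `(e^M)ᵢᵢ` are the averages of `μ` and `e^μ` with weights `|Uᵢⱼ|²`, so this is Jensen
  again, strict as soon as row `i` of `M` has a nonzero off-diagonal entry.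

When `c` is constant, `C` has such an entry, so one of the two steps is always strict.
-/

open Matrix NormedSpace Finset

namespace Real

variable {ι : Type*} [Fintype ι]

lemma sum_exp_mul_div_sum_exp_eq (d c : ι → ℝ) :
    (∑ i, exp (d i) * c i) / ∑ i, exp (d i) = ∑ i, (exp (d i) / ∑ j, exp (d j)) • c i := by
  simp_rw [sum_div, smul_eq_mul, div_mul_eq_mul_div]

variable [Nonempty ι]

lemma log_sum_exp_add_sub_log_sum_exp (d c : ι → ℝ) :
    log (∑ i, exp (d i + c i)) - log (∑ i, exp (d i)) =
      log (∑ i, (exp (d i) / ∑ j, exp (d j)) * exp (c i)) := by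
  rw [← log_div (by positivity) (by positivity), sum_div]
  simp_rw [exp_add, div_mul_eq_mul_div]

lemma sum_exp_div_sum_exp_eq_one (d : ι → ℝ) : ∑ i, exp (d i) / ∑ j, exp (d j) = 1 := by
  rw [← sum_div, div_self (by positivity)]

lemma sum_exp_mul_div_sum_exp_le (d c : ι → ℝ) :
    (∑ i, exp (d i) * c i) / ∑ i, exp (d i) ≤
      log (∑ i, exp (d i + c i)) - log (∑ i, exp (d i)) := by
  rw [log_sum_exp_add_sub_log_sum_exp, le_log_iff_exp_le (by positivity),
    sum_exp_mul_div_sum_exp_eq]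
  exact convexOn_exp.map_sum_le (fun i _ => by positivity) (sum_exp_div_sum_exp_eq_one d)
    fun i _ => Set.mem_univ _

lemma sum_exp_mul_div_sum_exp_lt {d c : ι → ℝ} (hc : ∃ i j, c i ≠ c j) :
    (∑ i, exp (d i) * c i) / ∑ i, exp (d i) <
      log (∑ i, exp (d i + c i)) - log (∑ i, exp (d i)) := by
  obtain ⟨i, j, hij⟩ := hc
  rw [log_sum_exp_add_sub_log_sum_exp, lt_log_iff_exp_lt (by positivity),
    sum_exp_mul_div_sum_exp_eq]
  exact strictConvexOn_exp.map_sum_lt (fun i _ => by positivity) (sum_exp_div_sum_exp_eq_one d)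
    (fun i _ => Set.mem_univ _) ⟨i, mem_univ _, j, mem_univ _, hij⟩

end Real

namespace Matrix

variable {n : Type*} [DecidableEq n]

lemma nonempty_of_ne_smul_one {C : Matrix n n ℂ}
    (hC : ∀ c : ℝ, C ≠ (c : ℂ) • (1 : Matrix n n ℂ)) : Nonempty n := by
  by_contra! h
  exact hC 0 (Subsingleton.elim _ _)

lemma IsHermitian.exists_offDiag_apply_ne_zero {C : Matrix n n ℂ} (hC : C.IsHermitian)
    (hC' : ∀ c : ℝ, C ≠ (c : ℂ) • (1 : Matrix n n ℂ)) {c : ℝ} (hdiag : ∀ i, (C i i).re = c) :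
    ∃ i k, i ≠ k ∧ C i k ≠ 0 := by
  by_contra! h
  refine hC' c (Matrix.ext fun i k => ?_)
  rcases eq_or_ne i k with rfl | hik
  · rw [← hC.coe_re_apply_self]
    simp [hdiag]
  · simp [h i k hik, one_apply_ne hik]

variable [Fintype n]

lemma exp_conjStarAlgAut (U : unitaryGroup n ℂ) (X : Matrix n n ℂ) :
    exp (Unitary.conjStarAlgAut ℂ _ U X) = Unitary.conjStarAlgAut ℂ _ U (exp X) :=
  exp_units_conj (Unitary.toUnits U) X

lemma trace_conjStarAlgAut (U : unitaryGroup n ℂ) (X : Matrix n n ℂ) :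
    trace (Unitary.conjStarAlgAut ℂ _ U X) = trace X :=
  trace_units_conj (Unitary.toUnits U) X

lemma exp_diagonal_ofReal (d : n → ℝ) :
    exp (diagonal (RCLike.ofReal ∘ d) : Matrix n n ℂ) =
      diagonal (RCLike.ofReal ∘ Real.exp ∘ d) := by
  rw [exp_diagonal]
  congr 1
  funext i
  simp [← Complex.exp_eq_exp_ℂ, Complex.ofReal_exp]

lemma IsHermitian.exp_eq {A : Matrix n n ℂ} (hA : A.IsHermitian) :
    NormedSpace.exp A = Unitary.conjStarAlgAut ℂ _ hA.eigenvectorUnitary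
      (diagonal (RCLike.ofReal ∘ Real.exp ∘ hA.eigenvalues)) := by
  conv_lhs => rw [hA.spectral_theorem]
  rw [exp_conjStarAlgAut, exp_diagonal_ofReal]

lemma mul_diagonal_mul_star_apply {α : Type*} [Semiring α] [StarRing α]
    (U : Matrix n n α) (e : n → α) (i k : n) :
    (U * diagonal e * star U) i k = ∑ j, U i j * e j * star (U k j) := by
  simp [mul_apply, diagonal_apply, star_apply]

lemma re_conjStarAlgAut_diagonal_apply_self (U : unitaryGroup n ℂ) (e : n → ℝ) (i : n) :
    (Unitary.conjStarAlgAut ℂ _ U (diagonal (RCLike.ofReal ∘ e)) i i).re =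
      ∑ j, Complex.normSq (U i j) * e j := by
  rw [Unitary.conjStarAlgAut_apply, mul_diagonal_mul_star_apply, Complex.re_sum]
  refine sum_congr rfl fun j _ => ?_
  simp [Complex.normSq_apply]
  ring

lemma sum_normSq_apply_eq_one (U : unitaryGroup n ℂ) (i : n) :
    ∑ j, Complex.normSq (U i j) = 1 := by
  simpa using (re_conjStarAlgAut_diagonal_apply_self U 1 i).symm

lemma conjStarAlgAut_diagonal_apply_eq_zero (U : unitaryGroup n ℂ) {e : n → ℝ} {i k : n}
    {c : ℝ} (he : ∀ j, U i j ≠ 0 → e j = c) (hik : i ≠ k) :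
    Unitary.conjStarAlgAut ℂ _ U (diagonal (RCLike.ofReal ∘ e)) i k = 0 := by
  have hrows : ∑ j, U i j * star (U k j) = 0 := by
    simpa [mul_apply, star_apply, one_apply_ne hik] using
      congrFun (congrFun (Unitary.coe_mul_star_self U) i) k
  rw [Unitary.conjStarAlgAut_apply, mul_diagonal_mul_star_apply, ← mul_zero (c : ℂ), ← hrows,
    mul_sum]
  refine sum_congr rfl fun j _ => ?_
  by_cases hj : U i j = 0
  · simp [hj]
  · simp [he j hj]
    ring

namespace IsHermitian

variable {A : Matrix n n ℂ} (hA : A.IsHermitian)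
include hA

lemma re_apply_self_eq_sum (i : n) :
    (A i i).re = ∑ j, Complex.normSq (hA.eigenvectorUnitary i j) * hA.eigenvalues j := by
  conv_lhs => rw [hA.spectral_theorem]
  exact re_conjStarAlgAut_diagonal_apply_self _ _ i

lemma re_exp_apply_self_eq_sum (i : n) :
    (NormedSpace.exp A i i).re =
      ∑ j, Complex.normSq (hA.eigenvectorUnitary i j) * Real.exp (hA.eigenvalues j) := by
  rw [hA.exp_eq]
  exact re_conjStarAlgAut_diagonal_apply_self _ _ i

theorem exp_re_apply_self_le (i : n) : Real.exp (A i i).re ≤ (NormedSpace.exp A i i).re := by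
  rw [hA.re_apply_self_eq_sum, hA.re_exp_apply_self_eq_sum]
  simpa only [smul_eq_mul] using convexOn_exp.map_sum_le (t := univ)
    (fun j _ => Complex.normSq_nonneg _) (sum_normSq_apply_eq_one _ i)
    fun j _ => Set.mem_univ (hA.eigenvalues j)

theorem exp_re_apply_self_lt {i k : n} (hik : i ≠ k) (hAik : A i k ≠ 0) :
    Real.exp (A i i).re < (NormedSpace.exp A i i).re := by
  refine (hA.exp_re_apply_self_le i).lt_of_ne fun heq => hAik ?_
  rw [hA.re_apply_self_eq_sum, hA.re_exp_apply_self_eq_sum] at heq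
  set U := hA.eigenvectorUnitary
  -- equality in Jensen: the eigenvalues met by row `i` of `U` coincide, so row `i` of `A` is
  -- that eigenvalue times row `i` of `U U* = 1`
  have hconst := (strictConvexOn_exp.map_sum_eq_iff_of_nonneg (t := univ)
    (fun j _ => Complex.normSq_nonneg (U i j)) (sum_normSq_apply_eq_one U i)
    fun j _ => Set.mem_univ (hA.eigenvalues j)).mp (by simpa only [smul_eq_mul] using heq)
  obtain ⟨j₀, hj₀⟩ : ∃ j, U i j ≠ 0 := by
    by_contra! h0
    simpa [h0] using sum_normSq_apply_eq_one U i
  rw [hA.spectral_theorem]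
  exact conjStarAlgAut_diagonal_apply_eq_zero U (fun j hj => hconst (mem_univ j)
    (Complex.normSq_pos.mpr hj).ne' (mem_univ j₀) (Complex.normSq_pos.mpr hj₀).ne') hik

theorem sum_exp_re_diag_le_re_trace_exp :
    ∑ i, Real.exp (A i i).re ≤ (trace (NormedSpace.exp A)).re := by
  rw [trace, Complex.re_sum]
  exact sum_le_sum fun i _ => hA.exp_re_apply_self_le i

theorem sum_exp_re_diag_lt_re_trace_exp (h : ∃ i k, i ≠ k ∧ A i k ≠ 0) :
    ∑ i, Real.exp (A i i).re < (trace (NormedSpace.exp A)).re := by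
  obtain ⟨i, k, hik, hAik⟩ := h
  rw [trace, Complex.re_sum]
  exact sum_lt_sum (fun i _ => hA.exp_re_apply_self_le i)
    ⟨i, mem_univ i, hA.exp_re_apply_self_lt hik hAik⟩

end IsHermitian

theorem re_trace_exp_diagonal_mul_div_lt (d : n → ℝ) {C : Matrix n n ℂ} (hC : C.IsHermitian)
    (hC' : ∀ c : ℝ, C ≠ (c : ℂ) • (1 : Matrix n n ℂ)) :
    let D : Matrix n n ℂ := diagonal (RCLike.ofReal ∘ d)
    (trace (exp D * C)).re / (trace (exp D)).re <
      Real.log (trace (exp (D + C))).re - Real.log (trace (exp D)).re := by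
  intro D
  have := nonempty_of_ne_smul_one hC'
  have hexpD : exp D = diagonal (RCLike.ofReal ∘ Real.exp ∘ d) := exp_diagonal_ofReal d
  have hZ : (trace (exp D)).re = ∑ i, Real.exp (d i) := by
    simp [hexpD, trace_diagonal, Complex.exp_ofReal_re]
  have hnum : (trace (exp D * C)).re = ∑ i, Real.exp (d i) * (C i i).re := by
    simp [hexpD, trace, diagonal_mul, Complex.exp_ofReal_re]
  have hDC : (D + C).IsHermitian :=
    (isHermitian_diagonal_iff.mpr fun i => Complex.conj_ofReal _).add hC
  have hDC_diag : ∀ i, ((D + C) i i).re = d i + (C i i).re := by simp [D]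
  have hsum_pos : 0 < ∑ i, Real.exp (d i + (C i i).re) := by positivity
  rw [hZ, hnum]
  by_cases hc : ∃ i j, (C i i).re ≠ (C j j).re
  · calc _ < Real.log (∑ i, Real.exp (d i + (C i i).re)) - Real.log (∑ i, Real.exp (d i)) :=
          Real.sum_exp_mul_div_sum_exp_lt hc
      _ ≤ _ := by
          gcongr
          simpa only [hDC_diag] using hDC.sum_exp_re_diag_le_re_trace_exp
  · push Not at hc
    obtain ⟨i, k, hik, hCik⟩ := hC.exists_offDiag_apply_ne_zero hC'
      (c := (C (Classical.arbitrary n) (Classical.arbitrary n)).re) fun i => hc _ _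
    have hoff : ∃ i k, i ≠ k ∧ (D + C) i k ≠ 0 := ⟨i, k, hik, by simpa [D, hik] using hCik⟩
    calc _ ≤ Real.log (∑ i, Real.exp (d i + (C i i).re)) - Real.log (∑ i, Real.exp (d i)) :=
          Real.sum_exp_mul_div_sum_exp_le _ _
      _ < _ := by
          gcongr
          simpa only [hDC_diag] using hDC.sum_exp_re_diag_lt_re_trace_exp hoff

theorem IsHermitian.re_trace_exp_mul_div_lt {H C : Matrix n n ℂ} (hH : H.IsHermitian)
    (hC : C.IsHermitian) (hC' : ∀ c : ℝ, C ≠ (c : ℂ) • (1 : Matrix n n ℂ)) :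
    (trace (NormedSpace.exp H * C)).re / (trace (NormedSpace.exp H)).re <
      Real.log (trace (NormedSpace.exp (H + C))).re -
        Real.log (trace (NormedSpace.exp H)).re := by
  set σ := Unitary.conjStarAlgAut ℂ (Matrix n n ℂ) hH.eigenvectorUnitary
  obtain ⟨C, rfl⟩ : ∃ C', σ C' = C := ⟨σ.symm C, σ.apply_symm_apply C⟩
  have hC_herm : IsSelfAdjoint C := by simpa using hC.isSelfAdjoint.map σ.symm
  have hC_scalar : ∀ c : ℝ, C ≠ (c : ℂ) • (1 : Matrix n n ℂ) := fun c h =>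
    hC' c (by rw [h, map_smul, map_one])
  rw [hH.spectral_theorem, ← map_add, exp_conjStarAlgAut, exp_conjStarAlgAut, ← map_mul,
    trace_conjStarAlgAut, trace_conjStarAlgAut, trace_conjStarAlgAut]
  exact re_trace_exp_diagonal_mul_div_lt hH.eigenvalues hC_herm hC_scalar

end Matrix

theorem peierls_bogoliubov_strict_general
    {n : Type*} [Fintype n] [DecidableEq n]
    (A B : Matrix n n ℂ) (hA : Aᴴ = A) (hB : Bᴴ = B)
    (hAB : ∀ c : ℝ, A - B ≠ (c : ℂ) • (1 : Matrix n n ℂ)) :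
    (trace (exp (-A) * (A - B))).re / (trace (exp (-A))).re <
      Real.log (trace (exp (-B))).re - Real.log (trace (exp (-A))).re ∧
    Real.log (trace (exp (-B))).re - Real.log (trace (exp (-A))).re <
      (trace (exp (-B) * (A - B))).re / (trace (exp (-B))).re := by
  have hBA : ∀ c : ℝ, B - A ≠ (c : ℂ) • (1 : Matrix n n ℂ) := fun c h =>
    hAB (-c) (by rw [← neg_sub, h]; simp)
  have lower := IsHermitian.re_trace_exp_mul_div_lt (IsHermitian.neg hA) (IsHermitian.sub hA hB) hAB
  have upper := IsHermitian.re_trace_exp_mul_div_lt (IsHermitian.neg hB) (IsHermitian.sub hB hA) hBA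
  rw [neg_add_eq_sub, sub_sub_cancel_left] at lower upper
  rw [← neg_sub A B, mul_neg, trace_neg, Complex.neg_re, neg_div] at upper
  exact ⟨lower, by linarith⟩

/-- Strict Peierls–Bogoliubov inequality: if `A - B` is not a real multiple of the
identity, both inequalities are strict. -/
theorem peierls_bogoliubov_strict
    {n : Type*} [Fintype n] [DecidableEq n] [Nonempty n]
    (A B : Matrix n n ℂ) (hA : Aᴴ = A) (hB : Bᴴ = B)
    (hAB : ∀ c : ℝ, A - B ≠ (c : ℂ) • (1 : Matrix n n ℂ)) :
    (trace (exp (-A) * (A - B))).re / (trace (exp (-A))).re <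
      Real.log (trace (exp (-B))).re - Real.log (trace (exp (-A))).re ∧
    Real.log (trace (exp (-B))).re - Real.log (trace (exp (-A))).re <
      (trace (exp (-B) * (A - B))).re / (trace (exp (-B))).re :=
  peierls_bogoliubov_strict_general A B hA hB hAB
end

section
/- Entropy inequality for normalized entropy operators: let R and S be Hermitian n×n complex matrices with Tr[exp(−R)] = 1 and Tr[exp(−S)] = 1. Then the real number Tr[exp(−R)·S] satisfies Tr[exp(−R)·S] ≥ Tr[exp(−R)·R], with equality if and only if R = S. (Here exp(−R) is a density matrix, Tr[exp(−R)·R] is its Gibbs entropy, and Tr[exp(−R)·S] is the average of the entropy operator S in the state exp(−R).) -/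
/-!
Diagonalise `R = U diag(r) Uᴴ` and `S = V diag(s) Vᴴ`. The squared moduli `pᵢⱼ = |(Uᴴ V)ᵢⱼ|²`
of the unitary `Uᴴ V` form a doubly stochastic matrix, and for `f x = exp (-x)` this turns
`Tr f(S) - Tr f(R) + Tr[f(R) (S - R)]` into `∑ pᵢⱼ (f sⱼ - f rᵢ - f' rᵢ (sⱼ - rᵢ))` (Klein's
inequality). Each Bregman term of the strictly convex `f` is nonnegative and vanishes only when
`rᵢ = sⱼ`, so the sum vanishes only when `diag(r) Uᴴ V = Uᴴ V diag(s)`, that is, when `R = S`.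
Under the normalisations `Tr f(R) = Tr f(S) = 1` the sum is `Tr[f(R) S] - Tr[f(R) R]`.
-/

open Matrix NormedSpace

namespace Real

noncomputable def expNegBregman (r s : ℝ) : ℝ := exp (-s) - exp (-r) + exp (-r) * (s - r)

lemma expNegBregman_eq (r s : ℝ) :
    expNegBregman r s = exp (-r) * (exp (r - s) - (r - s + 1)) := by
  have : exp (-s) = exp (-r) * exp (r - s) := by rw [← exp_add]; ring_nf
  rw [expNegBregman, this]; ring

lemma expNegBregman_nonneg (r s : ℝ) : 0 ≤ expNegBregman r s := by
  rw [expNegBregman_eq]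
  exact mul_nonneg (exp_pos _).le (sub_nonneg.2 (add_one_le_exp _))

lemma expNegBregman_eq_zero_iff {r s : ℝ} : expNegBregman r s = 0 ↔ r = s := by
  refine ⟨fun h => ?_, fun h => by simp [h, expNegBregman]⟩
  by_contra hrs
  have := add_one_lt_exp (sub_ne_zero.2 hrs)
  rw [expNegBregman_eq] at h
  nlinarith [exp_pos (-r)]

end Real

lemma Unitary.conj_eq_conj_of_mul_eq_mul {R : Type*} [Monoid R] [StarMul R] {U V a b : R}
    (hU : U ∈ unitary R) (hV : V ∈ unitary R) (h : a * (star U * V) = star U * V * b) :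
    U * a * star U = V * b * star V := by
  set W := star U * V
  have hW : W ∈ unitary R := Submonoid.mul_mem _ (Unitary.star_mem hU) hV
  have hV_eq : V = U * W := by rw [← mul_assoc, Unitary.mul_star_self_of_mem hU, one_mul]
  rw [hV_eq, star_mul]
  calc U * a * star U = U * a * (W * star W) * star U := by
        rw [Unitary.mul_star_self_of_mem hW, mul_one]
    _ = U * (a * W) * star W * star U := by simp only [mul_assoc]
    _ = U * W * b * (star W * star U) := by rw [h]; simp only [mul_assoc]

namespace Matrix

lemma IsHermitian.im_trace_mul {n : Type*} [Fintype n] {A B : Matrix n n ℂ}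
    (hA : A.IsHermitian) (hB : B.IsHermitian) : (trace (A * B)).im = 0 := by
  have : star (trace (A * B)) = trace (A * B) := by
    rw [← trace_conjTranspose, conjTranspose_mul, hA.eq, hB.eq, trace_mul_comm]
  exact Complex.conj_eq_iff_im.1 this

variable {n : Type*} [Fintype n] [DecidableEq n]

lemma sum_sum_mul_expNegBregman {M : Matrix n n ℝ} (hM : M ∈ doublyStochastic ℝ n)
    (r s : n → ℝ) :
    ∑ i, ∑ j, M i j * Real.expNegBregman (r i) (s j) =
      ∑ j, Real.exp (-s j) - ∑ i, Real.exp (-r i) + ∑ i, ∑ j, Real.exp (-r i) * s j * M i j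
        - ∑ i, Real.exp (-r i) * r i := by
  have hrow (f : n → ℝ) : ∑ i, ∑ j, M i j * f i = ∑ i, f i :=
    Finset.sum_congr rfl fun i _ => by
      rw [← Finset.sum_mul, sum_row_of_mem_doublyStochastic hM, one_mul]
  have hcol : ∑ i, ∑ j, M i j * Real.exp (-s j) = ∑ j, Real.exp (-s j) := by
    rw [Finset.sum_comm]
    exact Finset.sum_congr rfl fun j _ => by
      rw [← Finset.sum_mul, sum_col_of_mem_doublyStochastic hM, one_mul]
  rw [← hcol, ← hrow fun i => Real.exp (-r i), ← hrow fun i => Real.exp (-r i) * r i]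
  simp only [Real.expNegBregman, ← Finset.sum_sub_distrib, ← Finset.sum_add_distrib]
  exact Finset.sum_congr rfl fun i _ => Finset.sum_congr rfl fun j _ => by ring

lemma map_normSq_mem_doublyStochastic {W : Matrix n n ℂ} (hW : W ∈ unitaryGroup n ℂ) :
    W.map Complex.normSq ∈ doublyStochastic ℝ n := by
  have hrow {V : Matrix n n ℂ} (hV : V ∈ unitaryGroup n ℂ) (i : n) :
      ∑ j, Complex.normSq (V i j) = 1 := by
    have h : (V * star V) i i = (1 : Matrix n n ℂ) i i := by
      rw [Unitary.mul_star_self_of_mem hV]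
    simp only [mul_apply, star_apply, one_apply_eq, Complex.star_def, Complex.mul_conj] at h
    exact_mod_cast h
  refine mem_doublyStochastic_iff_sum.2 ⟨fun i j => Complex.normSq_nonneg _, hrow hW, fun j => ?_⟩
  simpa using hrow (Unitary.star_mem hW) j

lemma diagonal_mul_eq_mul_diagonal_of_ne_zero {m α : Type*} [Fintype m] [DecidableEq m]
    [CommSemiring α] {W : Matrix m n α} {d : m → α} {e : n → α}
    (h : ∀ i j, W i j ≠ 0 → d i = e j) : diagonal d * W = W * diagonal e := by
  ext i j
  rw [diagonal_mul, mul_diagonal]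
  by_cases hW : W i j = 0
  · simp [hW]
  · rw [h i j hW, mul_comm]

lemma trace_conj_diagonal_mul_conj_diagonal (U V : Matrix n n ℂ) (d e : n → ℂ) :
    trace (U * diagonal d * Uᴴ * (V * diagonal e * Vᴴ)) =
      ∑ i, ∑ j, d i * e j * Complex.normSq ((Uᴴ * V) i j) := by
  have hcyc : trace (U * diagonal d * Uᴴ * (V * diagonal e * Vᴴ)) =
      trace (diagonal d * (Uᴴ * V) * diagonal e * (Uᴴ * V)ᴴ) := by
    rw [conjTranspose_mul, conjTranspose_conjTranspose]
    simp only [mul_assoc]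
    rw [trace_mul_comm U]
    simp only [mul_assoc]
  rw [hcyc]
  generalize Uᴴ * V = W
  refine Finset.sum_congr rfl fun i _ => ?_
  rw [diag_apply, mul_apply]
  refine Finset.sum_congr rfl fun j _ => ?_
  rw [mul_diagonal, diagonal_mul, conjTranspose_apply, ← Complex.mul_conj, Complex.star_def]
  ring

lemma exp_unitary_conj_s2 {𝔸 : Type*} [NormedCommRing 𝔸] [NormedAlgebra ℚ 𝔸] [CompleteSpace 𝔸]
    [StarRing 𝔸] {U : Matrix n n 𝔸} (hU : U ∈ unitaryGroup n 𝔸) (A : Matrix n n 𝔸) :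
    exp (U * A * Uᴴ) = U * exp A * Uᴴ := by
  have h := Unitary.mul_star_self_of_mem hU
  rw [star_eq_conjTranspose] at h
  rw [← inv_eq_right_inv h, exp_conj U A (IsUnit.of_mul_eq_one _ h)]

lemma IsHermitian.exists_unitary_conj_diagonal {A : Matrix n n ℂ} (hA : A.IsHermitian) :
    ∃ U ∈ unitaryGroup n ℂ, ∃ r : n → ℝ, A = U * diagonal (fun i => (r i : ℂ)) * Uᴴ :=
  ⟨_, hA.eigenvectorUnitary.2, hA.eigenvalues, hA.spectral_theorem⟩

noncomputable def traceExpNegBregman (R S : Matrix n n ℂ) : ℝ :=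
  (trace (exp (-S))).re - (trace (exp (-R))).re + (trace (exp (-R) * (S - R))).re

section UnitaryConjDiagonal

variable {U V : Matrix n n ℂ}

lemma exp_neg_unitary_conj_diagonal (hU : U ∈ unitaryGroup n ℂ) (r : n → ℝ) :
    exp (-(U * diagonal (fun i => (r i : ℂ)) * Uᴴ)) =
      U * diagonal (fun i => (Real.exp (-r i) : ℂ)) * Uᴴ := by
  rw [← Matrix.neg_mul, ← Matrix.mul_neg, diagonal_neg, exp_unitary_conj_s2 hU, exp_diagonal]
  congr 3
  funext i
  rw [Pi.exp_def, ← Complex.exp_eq_exp_ℂ, Complex.ofReal_exp, Complex.ofReal_neg]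

lemma trace_exp_neg_unitary_conj_diagonal (hU : U ∈ unitaryGroup n ℂ) (r : n → ℝ) :
    trace (exp (-(U * diagonal (fun i => (r i : ℂ)) * Uᴴ))) =
      ((∑ i, Real.exp (-r i) : ℝ) : ℂ) := by
  rw [exp_neg_unitary_conj_diagonal hU, trace_mul_comm, ← mul_assoc,
    ← star_eq_conjTranspose, Unitary.star_mul_self_of_mem hU, one_mul, trace_diagonal]
  push_cast; rfl

lemma trace_exp_neg_unitary_conj_diagonal_mul (hU : U ∈ unitaryGroup n ℂ) (r s : n → ℝ) :
    trace (exp (-(U * diagonal (fun i => (r i : ℂ)) * Uᴴ)) *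
        (V * diagonal (fun j => (s j : ℂ)) * Vᴴ)) =
      ((∑ i, ∑ j, Real.exp (-r i) * s j * Complex.normSq ((Uᴴ * V) i j) : ℝ) : ℂ) := by
  rw [exp_neg_unitary_conj_diagonal hU, trace_conj_diagonal_mul_conj_diagonal]
  push_cast; rfl

lemma traceExpNegBregman_unitary_conj_diagonal (hU : U ∈ unitaryGroup n ℂ)
    (hV : V ∈ unitaryGroup n ℂ) (r s : n → ℝ) :
    traceExpNegBregman (U * diagonal (fun i => (r i : ℂ)) * Uᴴ)
        (V * diagonal (fun j => (s j : ℂ)) * Vᴴ) =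
      ∑ i, ∑ j, Complex.normSq ((Uᴴ * V) i j) * Real.expNegBregman (r i) (s j) := by
  have hUU : Uᴴ * U = 1 := Unitary.star_mul_self_of_mem hU
  have hW : Uᴴ * V ∈ unitaryGroup n ℂ := Submonoid.mul_mem _ (Unitary.star_mem hU) hV
  have hsum := sum_sum_mul_expNegBregman (map_normSq_mem_doublyStochastic hW) r s
  have hdiag : ∑ i, ∑ j, Real.exp (-r i) * r j * Complex.normSq ((1 : Matrix n n ℂ) i j) =
      ∑ i, Real.exp (-r i) * r i := by
    simp [one_apply, apply_ite]
  simp only [map_apply] at hsum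
  rw [hsum, traceExpNegBregman, mul_sub, trace_sub, Complex.sub_re,
    trace_exp_neg_unitary_conj_diagonal hU, trace_exp_neg_unitary_conj_diagonal hV,
    trace_exp_neg_unitary_conj_diagonal_mul hU, trace_exp_neg_unitary_conj_diagonal_mul hU, hUU]
  simp only [Complex.ofReal_re, hdiag]
  ring

lemma eq_of_traceExpNegBregman_unitary_conj_diagonal_eq_zero (hU : U ∈ unitaryGroup n ℂ)
    (hV : V ∈ unitaryGroup n ℂ) {r s : n → ℝ}
    (h : traceExpNegBregman (U * diagonal (fun i => (r i : ℂ)) * Uᴴ)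
      (V * diagonal (fun j => (s j : ℂ)) * Vᴴ) = 0) :
    U * diagonal (fun i => (r i : ℂ)) * Uᴴ = V * diagonal (fun j => (s j : ℂ)) * Vᴴ := by
  have hterm_nonneg (i j : n) :
      0 ≤ Complex.normSq ((Uᴴ * V) i j) * Real.expNegBregman (r i) (s j) :=
    mul_nonneg (Complex.normSq_nonneg _) (Real.expNegBregman_nonneg _ _)
  rw [traceExpNegBregman_unitary_conj_diagonal hU hV,
    Fintype.sum_eq_zero_iff_of_nonneg fun i => Fintype.sum_nonneg (hterm_nonneg i)] at h
  have hrs (i j : n) (hij : (Uᴴ * V) i j ≠ 0) : r i = s j := by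
    have hij0 := congr_fun
      ((Fintype.sum_eq_zero_iff_of_nonneg (hterm_nonneg i)).1 (congr_fun h i)) j
    rw [Pi.zero_apply, mul_eq_zero, Complex.normSq_eq_zero] at hij0
    exact Real.expNegBregman_eq_zero_iff.1 (hij0.resolve_left hij)
  exact Unitary.conj_eq_conj_of_mul_eq_mul hU hV
    (diagonal_mul_eq_mul_diagonal_of_ne_zero fun i j hij => congrArg _ (hrs i j hij))

end UnitaryConjDiagonal

namespace IsHermitian

variable {R S : Matrix n n ℂ}

lemma traceExpNegBregman_nonneg (hR : R.IsHermitian) (hS : S.IsHermitian) :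
    0 ≤ traceExpNegBregman R S := by
  obtain ⟨U, hU, r, rfl⟩ := hR.exists_unitary_conj_diagonal
  obtain ⟨V, hV, s, rfl⟩ := hS.exists_unitary_conj_diagonal
  rw [traceExpNegBregman_unitary_conj_diagonal hU hV]
  exact Fintype.sum_nonneg fun i => Fintype.sum_nonneg fun j =>
    mul_nonneg (Complex.normSq_nonneg _) (Real.expNegBregman_nonneg _ _)

lemma traceExpNegBregman_eq_zero_iff (hR : R.IsHermitian) (hS : S.IsHermitian) :
    traceExpNegBregman R S = 0 ↔ R = S := by
  refine ⟨fun h => ?_, fun h => by simp [h, traceExpNegBregman]⟩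
  obtain ⟨U, hU, r, rfl⟩ := hR.exists_unitary_conj_diagonal
  obtain ⟨V, hV, s, rfl⟩ := hS.exists_unitary_conj_diagonal
  exact eq_of_traceExpNegBregman_unitary_conj_diagonal_eq_zero hU hV h

end IsHermitian

end Matrix

theorem entropy_inequality_normalized_general
    {n : Type*} [Fintype n] [DecidableEq n]
    (R S : Matrix n n ℂ) (hR : Rᴴ = R) (hS : Sᴴ = S)
    (hRnorm : trace (exp (-R)) = 1) (hSnorm : trace (exp (-S)) = 1) :
    (trace (exp (-R) * S)).im = 0 ∧
    (trace (exp (-R) * R)).re ≤ (trace (exp (-R) * S)).re ∧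
    ((trace (exp (-R) * S)).re = (trace (exp (-R) * R)).re ↔ R = S) := by
  have hgap : traceExpNegBregman R S =
      (trace (exp (-R) * S)).re - (trace (exp (-R) * R)).re := by
    rw [traceExpNegBregman, hRnorm, hSnorm, mul_sub, trace_sub, Complex.sub_re, sub_self,
      zero_add]
  refine ⟨(IsHermitian.neg hR).exp.im_trace_mul hS, ?_, ?_⟩
  · linarith [IsHermitian.traceExpNegBregman_nonneg hR hS]
  · rw [← sub_eq_zero, ← hgap, IsHermitian.traceExpNegBregman_eq_zero_iff hR hS]

/-- Entropy inequality for normalized entropy operators: the average of the entropy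
operator `S` in the state `exp (-R)` is at least the Gibbs entropy of `exp (-R)`,
with equality iff `R = S`. -/
theorem entropy_inequality_normalized
    {n : Type*} [Fintype n] [DecidableEq n] [Nonempty n]
    (R S : Matrix n n ℂ) (hR : Rᴴ = R) (hS : Sᴴ = S)
    (hRnorm : trace (exp (-R)) = 1) (hSnorm : trace (exp (-S)) = 1) :
    (trace (exp (-R) * S)).im = 0 ∧
    (trace (exp (-R) * R)).re ≤ (trace (exp (-R) * S)).re ∧
    ((trace (exp (-R) * S)).re = (trace (exp (-R) * R)).re ↔ R = S) :=
  entropy_inequality_normalized_general R S hR hS hRnorm hSnorm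
end

section
/- Maximum entropy property of the quasi-equilibrium statistical operator: let ι be a finite type, let Pᵢ (i ∈ ι) be Hermitian n×n complex matrices and Fᵢ real numbers; set Φ = ln (Tr[exp(−∑ᵢ Fᵢ • Pᵢ)]) (a real number), S_q = Φ • 1 + ∑ᵢ Fᵢ • Pᵢ, and ρ_q = exp(−S_q), so that Tr[ρ_q] = 1. If R is a Hermitian n×n matrix with Tr[exp(−R)] = 1 and Tr[exp(−R)·Pᵢ] = Tr[ρ_q·Pᵢ] for every i ∈ ι, then the Gibbs entropy of exp(−R) is at most the quasi-equilibrium entropy: Tr[exp(−R)·R] ≤ Φ + ∑ᵢ Fᵢ · Tr[ρ_q·Pᵢ], with equality if and only if R = S_q. -/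
/-!
Klein's inequality for the convex function `x ↦ exp (-x)`. If `A`, `B` are Hermitian with
orthonormal eigenbases `uᵢ`, `vⱼ` and eigenvalues `aᵢ`, `bⱼ`, then
`Tr[e^{-B} - e^{-A} + e^{-A} (B - A)]` equals
`∑ᵢⱼ |⟨uᵢ, vⱼ⟩|² (e^{-bⱼ} - e^{-aᵢ} + e^{-aᵢ} (bⱼ - aᵢ))`, and each bracket is nonnegative by
convexity, vanishing only when `aᵢ = bⱼ`. So the trace is nonnegative, and it vanishes only if
`aᵢ = bⱼ` whenever `⟨uᵢ, vⱼ⟩ ≠ 0`, which forces `A = B`.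
For `A = R`, `B = S_q` both exponentials have unit trace, and the balance equations turn
`Tr[e^{-R} S_q]` into the quasi-equilibrium entropy `Φ + ∑ᵢ Fᵢ Tr[ρ_q Pᵢ]`.
-/

open Matrix NormedSpace

noncomputable def expNegBregman (x y : ℝ) : ℝ :=
  Real.exp (-y) - Real.exp (-x) + Real.exp (-x) * (y - x)

theorem expNegBregman_eq_mul (x y : ℝ) :
    expNegBregman x y = Real.exp (-x) * (Real.exp (x - y) - (x - y + 1)) := by
  have : Real.exp (-y) = Real.exp (-x) * Real.exp (x - y) := by rw [← Real.exp_add]; ring_nf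
  rw [expNegBregman, this]
  ring

theorem expNegBregman_nonneg (x y : ℝ) : 0 ≤ expNegBregman x y := by
  rw [expNegBregman_eq_mul]
  exact mul_nonneg (Real.exp_pos _).le (sub_nonneg.2 (Real.add_one_le_exp _))

theorem expNegBregman_eq_zero_iff {x y : ℝ} : expNegBregman x y = 0 ↔ x = y := by
  refine ⟨fun h => ?_, fun h => by simp [h, expNegBregman]⟩
  by_contra hxy
  rw [expNegBregman_eq_mul] at h
  exact (mul_pos (Real.exp_pos _) (sub_pos.2 (Real.add_one_lt_exp (sub_ne_zero.2 hxy)))).ne' h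

namespace Matrix

variable {n 𝕜 : Type*} [RCLike 𝕜] [Fintype n] [DecidableEq n] {A B : Matrix n n 𝕜}

theorem exp_neg_eq_cfc (hA : A.IsHermitian) :
    exp (-A) = cfc (fun x => Real.exp (-x)) A := by
  -- `exp` on matrices needs no norm, but its comparison with `cfc` is stated for normed
  -- algebras; the `ℓ∞` operator norm induces the product topology.
  let := Matrix.linftyOpNormedRing (n := n) (α := 𝕜)
  let := Matrix.linftyOpNormedAlgebra (n := n) (R := ℝ) (α := 𝕜)
  rw [cfc_comp_neg Real.exp A]
  exact (@CFC.real_exp_eq_normedSpace_exp _ _ _ _ IsHermitian.instContinuousFunctionalCalculus _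
    hA.isSelfAdjoint.neg).symm

theorem IsHermitian.trace_cfc_s3 (hA : A.IsHermitian) (f : ℝ → ℝ) :
    trace (cfc f A) = ∑ i, (f (hA.eigenvalues i) : 𝕜) := by
  rw [hA.cfc_eq, IsHermitian.cfc, Unitary.conjStarAlgAut_apply, trace_mul_cycle,
    Unitary.coe_star_mul_self, one_mul, trace_diagonal]
  rfl

theorem trace_exp_neg_eq_sum (hA : A.IsHermitian) :
    trace (exp (-A)) = ∑ i, (Real.exp (-hA.eigenvalues i) : 𝕜) := by
  rw [exp_neg_eq_cfc hA, hA.trace_cfc_s3]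

theorem exp_neg_smul_one_add_eq_cfc (c : ℝ) (hA : A.IsHermitian) :
    exp (-(c • 1 + A)) = cfc (fun x => Real.exp (-(c + x))) A := by
  have hcA : c • 1 + A = cfc (fun x => c + x) A := by
    rw [cfc_const_add .., cfc_id' .., Algebra.algebraMap_eq_smul_one]
  rw [exp_neg_eq_cfc ((isHermitian_one.smul (IsSelfAdjoint.all c)).add hA), hcA, ← cfc_comp' ..]

theorem trace_exp_neg_log_smul_one_add [Nonempty n] (hA : A.IsHermitian) :
    trace (exp (-(Real.log (RCLike.re (trace (exp (-A)))) • 1 + A))) = 1 := by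
  have hpos : 0 < ∑ i, Real.exp (-hA.eigenvalues i) :=
    Finset.sum_pos (fun i _ => Real.exp_pos _) Finset.univ_nonempty
  rw [exp_neg_smul_one_add_eq_cfc _ hA, hA.trace_cfc_s3, trace_exp_neg_eq_sum hA]
  simp only [map_sum, RCLike.ofReal_re, neg_add, Real.exp_add]
  rw [Real.exp_neg, Real.exp_log hpos]
  exact_mod_cast (Finset.mul_sum _ _ _).symm.trans (inv_mul_cancel₀ hpos.ne')

/-- `|⟨uᵢ, vⱼ⟩|²` for the eigenvectors `uᵢ` of `A` and `vⱼ` of `B`. -/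
noncomputable def IsHermitian.eigenOverlap (hA : A.IsHermitian) (hB : B.IsHermitian)
    (i j : n) : ℝ :=
  ‖(star (hA.eigenvectorUnitary : Matrix n n 𝕜) * (hB.eigenvectorUnitary : Matrix n n 𝕜)) i j‖ ^ 2

theorem IsHermitian.eigenOverlap_nonneg (hA : A.IsHermitian) (hB : B.IsHermitian) (i j : n) :
    0 ≤ hA.eigenOverlap hB i j :=
  sq_nonneg _

theorem IsHermitian.trace_cfc_mul_cfc (hA : A.IsHermitian) (hB : B.IsHermitian)
    (f g : ℝ → ℝ) :
    trace (cfc f A * cfc g B) = ∑ i, ∑ j,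
      ((hA.eigenOverlap hB i j * f (hA.eigenvalues i) * g (hB.eigenvalues j) : ℝ) : 𝕜) := by
  set U : Matrix n n 𝕜 := ↑hA.eigenvectorUnitary
  set V : Matrix n n 𝕜 := ↑hB.eigenvectorUnitary
  set W := star U * V
  have hcyc : cfc f A * cfc g B = U * (diagonal (RCLike.ofReal ∘ f ∘ hA.eigenvalues) * W *
      diagonal (RCLike.ofReal ∘ g ∘ hB.eigenvalues) * star W) * star U := by
    rw [hA.cfc_eq, hB.cfc_eq, IsHermitian.cfc, IsHermitian.cfc, Unitary.conjStarAlgAut_apply,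
      Unitary.conjStarAlgAut_apply]
    simp only [W, U, V, star_mul, star_star, Matrix.mul_assoc,
      Unitary.mul_star_self_of_mem hA.eigenvectorUnitary.2, Matrix.mul_one]
  rw [hcyc, trace_mul_cycle, Unitary.coe_star_mul_self, Matrix.one_mul, trace]
  refine Finset.sum_congr rfl fun i _ => ?_
  rw [diag_apply, mul_apply]
  refine Finset.sum_congr rfl fun j _ => ?_
  rw [mul_diagonal, diagonal_mul, star_apply, IsHermitian.eigenOverlap]
  push_cast
  rw [← RCLike.mul_conj]
  simp only [Function.comp_apply, RCLike.star_def, W, U, V]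
  ring

open scoped ComplexOrder in
theorem IsHermitian.eq_of_eigenOverlap_ne_zero (hA : A.IsHermitian) (hB : B.IsHermitian)
    (h : ∀ i j, hA.eigenOverlap hB i j ≠ 0 → hA.eigenvalues i = hB.eigenvalues j) : A = B := by
  have hAA : A * A = cfc (fun x : ℝ => x * x) A * cfc (1 : ℝ → ℝ) B := by
    rw [cfc_mul .., cfc_id' .., cfc_one .., Matrix.mul_one]
  have hAB : A * B = cfc (fun x : ℝ => x) A * cfc (fun x : ℝ => x) B := by
    rw [cfc_id' .., cfc_id' ..]
  have hBB : B * B = cfc (1 : ℝ → ℝ) A * cfc (fun x : ℝ => x * x) B := by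
    rw [cfc_mul .., cfc_id' .., cfc_one .., Matrix.one_mul]
  have htrace : trace ((A - B)ᴴ * (A - B)) = ∑ i, ∑ j,
      ((hA.eigenOverlap hB i j * (hA.eigenvalues i - hB.eigenvalues j) ^ 2 : ℝ) : 𝕜) := by
    rw [conjTranspose_sub, hA.eq, hB.eq, sub_mul, mul_sub, mul_sub, trace_sub, trace_sub,
      trace_sub, trace_mul_comm B A, hAA, hAB, hBB]
    simp only [hA.trace_cfc_mul_cfc hB, ← Finset.sum_sub_distrib]
    refine Finset.sum_congr rfl fun i _ => Finset.sum_congr rfl fun j _ => ?_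
    simp only [Pi.one_apply]
    push_cast
    ring
  have hzero : trace ((A - B)ᴴ * (A - B)) = 0 := by
    rw [htrace]
    refine Finset.sum_eq_zero fun i _ => Finset.sum_eq_zero fun j _ => ?_
    by_cases hM : hA.eigenOverlap hB i j = 0
    · simp [hM]
    · simp [h i j hM]
  exact sub_eq_zero.1 (trace_conjTranspose_mul_self_eq_zero_iff.1 hzero)

theorem re_trace_exp_neg_klein_eq_sum (hA : A.IsHermitian) (hB : B.IsHermitian) :
    RCLike.re (trace (exp (-B))) - RCLike.re (trace (exp (-A))) +
        (RCLike.re (trace (exp (-A) * B)) - RCLike.re (trace (exp (-A) * A))) =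
      ∑ i, ∑ j, hA.eigenOverlap hB i j * expNegBregman (hA.eigenvalues i) (hB.eigenvalues j) := by
  have h1 : exp (-A) * B = cfc (fun x => Real.exp (-x)) A * cfc (fun x : ℝ => x) B := by
    rw [exp_neg_eq_cfc hA, cfc_id' ..]
  have h2 : exp (-A) = cfc (fun x => Real.exp (-x)) A * cfc (1 : ℝ → ℝ) B := by
    rw [exp_neg_eq_cfc hA, cfc_one .., Matrix.mul_one]
  have h3 : exp (-A) * A = cfc (fun x => Real.exp (-x) * x) A * cfc (1 : ℝ → ℝ) B := by
    rw [cfc_mul .., cfc_id' .., cfc_one .., Matrix.mul_one, exp_neg_eq_cfc hA]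
  have h4 : exp (-B) = cfc (1 : ℝ → ℝ) A * cfc (fun x => Real.exp (-x)) B := by
    rw [exp_neg_eq_cfc hB, cfc_one .., Matrix.one_mul]
  rw [h1, h3, h4, h2]
  simp only [hA.trace_cfc_mul_cfc hB, map_sum, RCLike.ofReal_re, ← Finset.sum_sub_distrib,
    ← Finset.sum_add_distrib]
  refine Finset.sum_congr rfl fun i _ => Finset.sum_congr rfl fun j _ => ?_
  simp only [expNegBregman, Pi.one_apply]
  ring

theorem klein_exp_neg (hA : A.IsHermitian) (hB : B.IsHermitian) :
    0 ≤ RCLike.re (trace (exp (-B))) - RCLike.re (trace (exp (-A))) +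
        (RCLike.re (trace (exp (-A) * B)) - RCLike.re (trace (exp (-A) * A))) := by
  rw [re_trace_exp_neg_klein_eq_sum hA hB]
  exact Finset.sum_nonneg fun i _ => Finset.sum_nonneg fun j _ =>
    mul_nonneg (hA.eigenOverlap_nonneg hB i j) (expNegBregman_nonneg _ _)

theorem klein_exp_neg_eq_zero_iff (hA : A.IsHermitian) (hB : B.IsHermitian) :
    RCLike.re (trace (exp (-B))) - RCLike.re (trace (exp (-A))) +
        (RCLike.re (trace (exp (-A) * B)) - RCLike.re (trace (exp (-A) * A))) = 0 ↔ A = B := by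
  have hterm : ∀ i j, 0 ≤ hA.eigenOverlap hB i j *
      expNegBregman (hA.eigenvalues i) (hB.eigenvalues j) := fun i j =>
    mul_nonneg (hA.eigenOverlap_nonneg hB i j) (expNegBregman_nonneg _ _)
  refine ⟨fun h => hA.eq_of_eigenOverlap_ne_zero hB fun i j hM => ?_, fun h => by rw [h]; ring⟩
  rw [re_trace_exp_neg_klein_eq_sum hA hB] at h
  have hrow := (Finset.sum_eq_zero_iff_of_nonneg fun i _ => Finset.sum_nonneg fun j _ =>
    hterm i j).1 h i (Finset.mem_univ _)
  have hij :=
    (Finset.sum_eq_zero_iff_of_nonneg fun j _ => hterm i j).1 hrow j (Finset.mem_univ _)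
  exact expNegBregman_eq_zero_iff.1 ((mul_eq_zero.1 hij).resolve_left hM)

theorem re_trace_mul_smul_one_add_sum_smul {ι : Type*} [Fintype ι] (M : Matrix n n 𝕜) (c : ℝ)
    (F : ι → ℝ) (P : ι → Matrix n n 𝕜) :
    RCLike.re (trace (M * (c • 1 + ∑ i, F i • P i))) =
      c * RCLike.re (trace M) + ∑ i, F i * RCLike.re (trace (M * P i)) := by
  simp [Matrix.mul_add, Finset.mul_sum, trace_sum, RCLike.smul_re]

end Matrix

/-- Maximum entropy property of the quasi-equilibrium statistical operator: among all
normalized Hermitian "entropy operators" `R` reproducing the averages of the gross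
variables `P i`, the quasi-equilibrium one `S_q` has maximal Gibbs entropy. -/
theorem maxEnt_quasi_equilibrium
    {n : Type*} [Fintype n] [DecidableEq n] [Nonempty n]
    {ι : Type*} [Fintype ι]
    (P : ι → Matrix n n ℂ) (F : ι → ℝ) (hP : ∀ i, (P i)ᴴ = P i)
    (Φ : ℝ) (hΦ : Φ = Real.log (trace (exp (-(∑ i, F i • P i)))).re)
    (Sq : Matrix n n ℂ) (hSq : Sq = Φ • (1 : Matrix n n ℂ) + ∑ i, F i • P i)
    (R : Matrix n n ℂ) (hR : Rᴴ = R)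
    (hRnorm : trace (exp (-R)) = 1)
    (hbal : ∀ i, trace (exp (-R) * P i) = trace (exp (-Sq) * P i)) :
    trace (exp (-Sq)) = 1 ∧
    (trace (exp (-R) * R)).re ≤ Φ + ∑ i, F i * (trace (exp (-Sq) * P i)).re ∧
    ((trace (exp (-R) * R)).re = Φ + ∑ i, F i * (trace (exp (-Sq) * P i)).re ↔
      R = Sq) := by
  have hH : (∑ i, F i • P i).IsHermitian :=
    isSelfAdjoint_sum _ fun i _ => IsHermitian.smul (hP i) (IsSelfAdjoint.all (F i))
  have hSqH : Sq.IsHermitian := hSq ▸ (isHermitian_one.smul (IsSelfAdjoint.all Φ)).add hH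
  have hnorm : trace (exp (-Sq)) = 1 := hSq ▸ hΦ ▸ trace_exp_neg_log_smul_one_add hH
  have hmean : (trace (exp (-R) * Sq)).re = Φ + ∑ i, F i * (trace (exp (-Sq) * P i)).re := by
    have h := re_trace_mul_smul_one_add_sum_smul (exp (-R)) Φ F P
    rw [← hSq] at h
    simpa [hRnorm, hbal] using h
  have hklein := klein_exp_neg hR hSqH
  have hklein_eq := klein_exp_neg_eq_zero_iff hR hSqH
  simp only [hnorm, hRnorm, RCLike.re_to_complex, hmean, Complex.one_re] at hklein hklein_eq
  refine ⟨hnorm, by linarith, ?_⟩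
  rw [← hklein_eq]
  constructor <;> intro h <;> linarith
end

section
/- Derivative of the Massieu–Planck function gives the gross-variable averages: let S and P be Hermitian n×n complex matrices. Then the function g : ℝ → ℝ defined by g(x) = ln (Tr[exp(−(S + x • P))]) is differentiable on ℝ, and for every x, g'(x) = − Tr[exp(−(S + x • P))·P] / Tr[exp(−(S + x • P))] (the quotient of two real numbers). -/
/-!
Write `Tr exp (A + sB) = Tr 1 + ∑ₖ Tr (A + sB)^(k+1) / (k+1)!`. By cyclicity of the trace,
`d/ds Tr (A + sB)^(k+1) = (k+1) Tr ((A + sB)^k B)`, so the termwise derivatives form the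
exponential series of `Tr (exp (A + sB) B)`; they are dominated by `‖B‖ Rᵏ / k!` near any point,
which justifies termwise differentiation. For Hermitian `H`, `exp H = Bᴴ B` with
`B = exp (H / 2)` invertible, so `exp H` is positive definite and `Re Tr exp H > 0`; the chain
rule for `log` then gives the Massieu–Planck derivative.
-/

open Matrix NormedSpace

section Tracial

variable {𝕜 𝔸 E : Type*} [RCLike 𝕜] [NormedRing 𝔸] [NormedAlgebra 𝕜 𝔸]
  [NormedAddCommGroup E] [NormedSpace 𝕜 E] {φ : 𝔸 →L[𝕜] E}

theorem HasDerivAt.map_pow_succ_of_map_mul_comm (hφ : ∀ a b, φ (a * b) = φ (b * a))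
    {f : 𝕜 → 𝔸} {f' : 𝔸} {x : 𝕜} (hf : HasDerivAt f f' x) (k : ℕ) :
    HasDerivAt (fun y => φ (f y ^ (k + 1))) ((k + 1 : 𝕜) • φ (f x ^ k * f')) x := by
  have cyclic : ∀ i ∈ Finset.range (k + 1),
      φ (f x ^ (k - i) * f' * f x ^ i) = φ (f x ^ k * f') := fun i hi => by
    rw [hφ, ← mul_assoc, ← pow_add, Nat.add_sub_cancel' (Finset.mem_range_succ_iff.mp hi)]
  refine (φ.hasFDerivAt.comp_hasDerivAt x (hf.fun_pow' (k + 1))).congr_deriv ?_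
  rw [map_sum, Nat.pred_succ, Finset.sum_congr rfl cyclic, Finset.sum_const, Finset.card_range,
    ← Nat.cast_smul_eq_nsmul 𝕜, Nat.cast_succ]

theorem norm_inv_factorial_smul_map_pow_mul_le [NormOneClass 𝔸] (a b : 𝔸) (k : ℕ) :
    ‖(k.factorial : 𝕜)⁻¹ • φ (a ^ k * b)‖ ≤ ‖φ‖ * ‖b‖ * (‖a‖ ^ k / k.factorial) :=
  calc ‖(k.factorial : 𝕜)⁻¹ • φ (a ^ k * b)‖
      ≤ (k.factorial : ℝ)⁻¹ * (‖φ‖ * (‖a‖ ^ k * ‖b‖)) := by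
        rw [norm_smul, norm_inv, RCLike.norm_natCast]
        gcongr
        exact φ.le_opNorm_of_le ((norm_mul_le _ _).trans (by gcongr; exact norm_pow_le _ _))
    _ = ‖φ‖ * ‖b‖ * (‖a‖ ^ k / k.factorial) := by ring

variable [CompleteSpace 𝔸] [NormOneClass 𝔸] [CompleteSpace E]

theorem hasDerivAt_map_exp_add_smul (hφ : ∀ a b, φ (a * b) = φ (b * a)) (a b : 𝔸) (t : 𝕜) :
    HasDerivAt (fun s => φ (exp (a + s • b))) (φ (exp (a + t • b) * b)) t := by
  have hc (s : 𝕜) : HasDerivAt (fun s => a + s • b) b s := by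
    simpa using ((hasDerivAt_id s).smul_const b).const_add a
  set c : 𝕜 → 𝔸 := fun s => a + s • b
  have hasSum_terms (s : 𝕜) : HasSum (fun k => ((k + 1).factorial : 𝕜)⁻¹ • φ (c s ^ (k + 1)))
      (φ (exp (c s)) - φ 1) := by
    have h := (exp_series_hasSum_exp' (𝕂 := 𝕜) (c s)).mapL φ
    rw [← hasSum_nat_add_iff' 1] at h
    simpa using h
  have hasSum_derivs :
      HasSum (fun k => (k.factorial : 𝕜)⁻¹ • φ (c t ^ k * b)) (φ (exp (c t) * b)) := by
    simpa using (exp_series_hasSum_exp' (𝕂 := 𝕜) (c t)).mapL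
      (φ.comp ((ContinuousLinearMap.mul 𝕜 𝔸).flip b))
  have hasDerivAt_term (k : ℕ) (s : 𝕜) :
      HasDerivAt (fun s => ((k + 1).factorial : 𝕜)⁻¹ • φ (c s ^ (k + 1)))
        ((k.factorial : 𝕜)⁻¹ • φ (c s ^ k * b)) s := by
    refine (((hc s).map_pow_succ_of_map_mul_comm hφ k).const_smul _).congr_deriv ?_
    rw [smul_smul, Nat.factorial_succ]
    congr 1
    push_cast
    field_simp
  set A := ‖a‖ + (‖t‖ + 1) * ‖b‖
  have bound (k : ℕ) (s : 𝕜) (hs : s ∈ Metric.ball t 1) :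
      ‖(k.factorial : 𝕜)⁻¹ • φ (c s ^ k * b)‖ ≤ ‖φ‖ * ‖b‖ * (A ^ k / k.factorial) := by
    have hs' : ‖s‖ ≤ ‖t‖ + 1 := by linarith [norm_sub_norm_le s t, mem_ball_iff_norm.mp hs]
    have hcs : ‖c s‖ ≤ A :=
      (norm_add_le _ _).trans <| by rw [norm_smul]; unfold A; gcongr
    refine (norm_inv_factorial_smul_map_pow_mul_le (c s) b k).trans ?_
    gcongr
  have h := hasDerivAt_tsum_of_isPreconnected
    ((Real.summable_pow_div_factorial A).mul_left (‖φ‖ * ‖b‖)) Metric.isOpen_ball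
    (convex_ball t 1).isPreconnected (fun k s _ => hasDerivAt_term k s) bound
    (Metric.mem_ball_self one_pos) (hasSum_terms t).summable (Metric.mem_ball_self one_pos)
  rw [hasSum_derivs.tsum_eq] at h
  convert h.const_add (φ 1) using 1
  funext s
  rw [(hasSum_terms s).tsum_eq, add_sub_cancel]

end Tracial

section MatrixTrace

variable {𝕜 n : Type*} [RCLike 𝕜] [Fintype n] [DecidableEq n]

open scoped ComplexOrder in
theorem Matrix.IsHermitian.posDef_exp {H : Matrix n n 𝕜} (hH : H.IsHermitian) :
    (NormedSpace.exp H).PosDef := by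
  set B := NormedSpace.exp ((2⁻¹ : ℝ) • H)
  have hB : Bᴴ = B := (hH.smul (IsSelfAdjoint.all _)).exp
  have : NormedSpace.exp H = Bᴴ * B := by
    rw [hB, ← sq, ← Matrix.exp_nsmul]
    congr 1
    module
  rw [this]
  exact .conjTranspose_mul_self _ (Matrix.mulVec_injective_iff_isUnit.mpr (isUnit_exp _))

open scoped ComplexOrder in
theorem Matrix.IsHermitian.re_trace_exp_pos [Nonempty n] {H : Matrix n n 𝕜}
    (hH : H.IsHermitian) :
    0 < RCLike.re (trace (NormedSpace.exp H)) :=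
  (RCLike.pos_iff.mp hH.posDef_exp.trace_pos).1

section

-- Any submultiplicative norm with `‖1‖ = 1` would do; the statement does not mention the norm.
attribute [local instance] Matrix.linftyOpNormedRing Matrix.linftyOpNormedAlgebra

theorem Matrix.hasDerivAt_trace_exp_add_smul [Nonempty n] (A B : Matrix n n 𝕜) (t : ℝ) :
    HasDerivAt (fun s : ℝ => trace (exp (A + s • B))) (trace (exp (A + t • B) * B)) t :=
  hasDerivAt_map_exp_add_smul (φ := LinearMap.toContinuousLinearMap (traceLinearMap n ℝ 𝕜))
    trace_mul_comm A B t

end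

end MatrixTrace

/-- Derivative of the Massieu–Planck function: the derivative of
`x ↦ ln Tr exp (-(S + x • P))` is minus the average of the gross variable `P`. -/
theorem deriv_massieu_planck
    {n : Type*} [Fintype n] [DecidableEq n] [Nonempty n]
    (S P : Matrix n n ℂ) (hS : Sᴴ = S) (hP : Pᴴ = P) :
    ∀ x : ℝ,
      HasDerivAt (fun y : ℝ => Real.log (trace (exp (-(S + y • P)))).re)
        (-(trace (exp (-(S + x • P)) * P)).re / (trace (exp (-(S + x • P)))).re)
        x := by
  intro x
  have hH : (-(S + x • P)).IsHermitian :=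
    (IsHermitian.add hS (IsHermitian.smul hP (IsSelfAdjoint.all x))).neg
  have htr := Matrix.hasDerivAt_trace_exp_add_smul (-S) (-P) x
  simp only [smul_neg, ← neg_add, mul_neg, trace_neg] at htr
  simpa [neg_div] using
    (Complex.reCLM.hasFDerivAt.comp_hasDerivAt x htr).log hH.re_trace_exp_pos.ne'
end

section
/- Derivative of the trace of a matrix exponential: let A : ℝ → Matrix n n ℂ be a function that has derivative A' t at a point t (in the sense of HasDerivAt). Then the function t ↦ Tr[exp(A t)] has derivative Tr[exp(A t) * A' t] at t. (No commutativity between A t and A' t is assumed; the trace collapses the Duhamel formula.) -/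
/-!
Write `exp y = ∑ yᵏ / k!`. For a continuous linear functional `τ` with `τ (a * b) = τ (b * a)`,
cyclicity turns the noncommutative derivative `h ↦ ∑ᵢ y^(k-1-i) h yⁱ` of `y ↦ yᵏ` into
`h ↦ k • τ (y^(k-1) * h)`, so the termwise derivatives of `∑ τ (yᵏ) / k!` are `τ (y^(k-1) * h) / (k-1)!`
and sum to `h ↦ τ (exp y * h)`. Their norms are bounded by `‖τ‖ Rᵏ⁻¹ / (k-1)!` on the ball of
radius `R`, so the series may be differentiated termwise. The trace is such a `τ`.
-/

open Matrix NormedSpace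

attribute [local instance] Matrix.linftyOpNormedRing Matrix.linftyOpNormedAlgebra

open scoped Nat

theorem Real.summable_nat_mul_pow_sub_one_div_factorial (r : ℝ) :
    Summable fun k : ℕ => k * r ^ (k - 1) / k ! := by
  rw [← summable_nat_add_iff 1]
  refine (Real.summable_pow_div_factorial r).congr fun k => ?_
  rw [Nat.add_sub_cancel, Nat.factorial_succ]
  push_cast
  field_simp

section TraceLike

open ContinuousLinearMap

variable {𝕂 𝔸 F : Type*} [RCLike 𝕂] [NormedRing 𝔸] [NormedAlgebra 𝕂 𝔸]
  [NormedAddCommGroup F] [NormedSpace 𝕂 F] {τ : 𝔸 →L[𝕂] F}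

theorem hasFDerivAt_map_pow_of_map_mul_comm (hτ : ∀ a b, τ (a * b) = τ (b * a)) (k : ℕ)
    (x : 𝔸) :
    HasFDerivAt (fun y => τ (y ^ k)) ((k : 𝕂) • τ.comp (mul 𝕂 𝔸 (x ^ (k - 1)))) x := by
  refine (τ.hasFDerivAt.comp x (hasFDerivAt_pow' k)).congr_fderiv (ext fun h => ?_)
  have hcyc : ∀ i ∈ Finset.range k, τ (x ^ (k - 1 - i) * h * x ^ i) = τ (x ^ (k - 1) * h) := by
    intro i hi
    rw [hτ, ← mul_assoc, ← pow_add, Nat.add_sub_cancel' (by grind)]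
  simp [map_sum, Finset.sum_congr rfl hcyc, Nat.cast_smul_eq_nsmul]

theorem hasSum_termwise_fderiv_map_exp [CompleteSpace 𝔸] (x : 𝔸) :
    HasSum (fun k : ℕ => (k ! : 𝕂)⁻¹ • (k : 𝕂) • τ.comp (mul 𝕂 𝔸 (x ^ (k - 1))))
      (τ.comp (mul 𝕂 𝔸 (exp x))) := by
  have h := (exp_series_hasSum_exp' (𝕂 := 𝕂) x).mapL ((compL 𝕂 𝔸 𝔸 F τ).comp (mul 𝕂 𝔸))
  rw [← hasSum_nat_add_iff' 1]
  simp only [Finset.range_one, Finset.sum_singleton, Nat.cast_zero, zero_smul, smul_zero,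
    sub_zero, Nat.add_sub_cancel]
  refine h.congr_fun fun k => ?_
  simp [Nat.factorial_succ, smul_smul, mul_assoc,
    inv_mul_cancel₀ (Nat.cast_add_one_ne_zero (R := 𝕂) k)]

theorem norm_termwise_fderiv_map_exp_le [NormOneClass 𝔸] (k : ℕ) (y : 𝔸) :
    ‖(k ! : 𝕂)⁻¹ • (k : 𝕂) • τ.comp (mul 𝕂 𝔸 (y ^ (k - 1)))‖ ≤
      ‖τ‖ * (k * ‖y‖ ^ (k - 1) / k !) := by
  have hcomp : ‖τ.comp (mul 𝕂 𝔸 (y ^ (k - 1)))‖ ≤ ‖τ‖ * ‖y‖ ^ (k - 1) :=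
    calc ‖τ.comp (mul 𝕂 𝔸 (y ^ (k - 1)))‖ ≤ ‖τ‖ * ‖mul 𝕂 𝔸 (y ^ (k - 1))‖ := opNorm_comp_le _ _
      _ ≤ ‖τ‖ * ‖y‖ ^ (k - 1) := by
        gcongr
        exact (opNorm_mul_apply_le _ _ _).trans (norm_pow_le _ _)
  rw [norm_smul, norm_smul, norm_inv, RCLike.norm_natCast, RCLike.norm_natCast]
  calc (k ! : ℝ)⁻¹ * (k * ‖τ.comp (mul 𝕂 𝔸 (y ^ (k - 1)))‖)
      ≤ (k ! : ℝ)⁻¹ * (k * (‖τ‖ * ‖y‖ ^ (k - 1))) := by gcongr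
    _ = ‖τ‖ * (k * ‖y‖ ^ (k - 1) / k !) := by ring

theorem hasFDerivAt_map_exp_of_map_mul_comm [CompleteSpace 𝔸] [NormOneClass 𝔸] [CompleteSpace F]
    (hτ : ∀ a b, τ (a * b) = τ (b * a)) (x : 𝔸) :
    HasFDerivAt (fun y => τ (exp y)) (τ.comp (mul 𝕂 𝔸 (exp x))) x := by
  have hseries : (fun y => τ (exp y)) = fun y => ∑' k : ℕ, (k ! : 𝕂)⁻¹ • τ (y ^ k) := by
    ext y
    rw [exp_eq_tsum 𝕂, τ.map_tsum (expSeries_summable' y)]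
    simp only [map_smul]
  let : NormedSpace ℝ 𝔸 := .restrictScalars ℝ 𝕂 𝔸
  set R := ‖x‖ + 1
  have hx : x ∈ Metric.ball 0 R := by simp [R]
  rw [hseries, ← (hasSum_termwise_fderiv_map_exp x).tsum_eq]
  refine hasFDerivAt_tsum_of_isPreconnected
    ((Real.summable_nat_mul_pow_sub_one_div_factorial R).mul_left ‖τ‖) Metric.isOpen_ball
    (convex_ball 0 R).isPreconnected
    (fun k y _ => (hasFDerivAt_map_pow_of_map_mul_comm hτ k y).const_smul _)
    (fun k y hy => (norm_termwise_fderiv_map_exp_le k y).trans ?_) hx ?_ hx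
  · gcongr
    exact (mem_ball_zero_iff.mp hy).le
  · exact ((expSeries_summable' x).mapL τ).congr fun k => map_smul τ _ _

end TraceLike

/-- Derivative of the trace of a matrix exponential: the trace collapses the Duhamel
formula, so no commutativity between `A t` and `A' t` is needed. -/
theorem hasDerivAt_trace_exp
    {n : Type*} [Fintype n] [DecidableEq n] [Nonempty n]
    (A : ℝ → Matrix n n ℂ) (A' : Matrix n n ℂ) (t : ℝ)
    (hA : HasDerivAt A A' t) :
    HasDerivAt (fun s : ℝ => trace (exp (A s))) (trace (exp (A t) * A')) t := by
  let τ : Matrix n n ℂ →L[ℂ] ℂ := LinearMap.toContinuousLinearMap (traceLinearMap n ℂ ℂ)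
  exact ((hasFDerivAt_map_exp_of_map_mul_comm (τ := τ) trace_mul_comm (A t)).restrictScalars ℝ
    ).comp_hasDerivAt t hA
end

section
/- Convexity of the logarithmic trace-exponential on Hermitian matrices: for all Hermitian n×n complex matrices A and B and every t ∈ [0,1], ln Tr[exp(t • A + (1−t) • B)] ≤ t · ln Tr[exp(A)] + (1−t) · ln Tr[exp(B)], where the traces are positive real numbers. -/
/-!
Diagonalise `C = t • A + (1 - t) • B` by a unitary `U`. The eigenvalues of `C` are then
`t * a i + (1 - t) * b i`, where `a` and `b` are the diagonals of `Uᴴ A U` and `Uᴴ B U`, so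
convexity of log-sum-exp bounds `log Tr exp C` by `t log ∑ exp a + (1 - t) log ∑ exp b`.
Peierls' inequality `∑ exp a ≤ Tr exp A` (and likewise for `B`) finishes the proof.
-/

open Matrix NormedSpace Finset

namespace Real

theorem convexOn_log_sum_exp {ι : Type*} [Fintype ι] [Nonempty ι] :
    ConvexOn ℝ Set.univ fun x : ι → ℝ => log (∑ i, exp (x i)) := by
  refine ⟨convex_univ, fun x _ y _ s u hs hu hsu => ?_⟩
  set α := log (∑ i, exp (x i))
  set β := log (∑ i, exp (y i))
  -- After subtracting `α` and `β` the exponentials sum to `1`, so convexity of `exp`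
  -- can be summed termwise.
  have normalize (z : ι → ℝ) : ∑ i, exp (z i - log (∑ j, exp (z j))) = 1 := by
    simp_rw [exp_sub, ← sum_div, exp_log (by positivity : 0 < ∑ j, exp (z j))]
    exact div_self (by positivity)
  have termwise (i : ι) : exp ((s • x + u • y) i)
      ≤ exp (s * α + u * β) * (s * exp (x i - α) + u * exp (y i - β)) := by
    calc exp ((s • x + u • y) i)
        = exp (s * α + u * β) * exp (s * (x i - α) + u * (y i - β)) := by
          rw [← exp_add]; congr 1; simp only [Pi.add_apply, Pi.smul_apply, smul_eq_mul]; ring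
      _ ≤ _ := by
          gcongr
          simpa using convexOn_exp.2 (Set.mem_univ (x i - α)) (Set.mem_univ (y i - β)) hs hu hsu
  rw [smul_eq_mul, smul_eq_mul, log_le_iff_le_exp (by positivity)]
  calc ∑ i, exp ((s • x + u • y) i)
      ≤ ∑ i, exp (s * α + u * β) * (s * exp (x i - α) + u * exp (y i - β)) :=
        sum_le_sum fun i _ => termwise i
    _ = exp (s * α + u * β) := by
        rw [← mul_sum, sum_add_distrib, ← mul_sum, ← mul_sum, normalize x, normalize y]
        simp [hsu]

end Real

namespace Matrix

variable {𝕜 n : Type*} [RCLike 𝕜] [Fintype n] [DecidableEq n]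

theorem sum_norm_sq_apply_eq_one_of_mem_unitaryGroup {W : Matrix n n 𝕜}
    (hW : W ∈ unitaryGroup n 𝕜) (i : n) : ∑ j, ‖W j i‖ ^ 2 = 1 := by
  have h := congr_fun₂ (mem_unitaryGroup_iff'.mp hW) i i
  simp only [mul_apply, star_apply, RCLike.star_def, RCLike.conj_mul, one_apply_eq] at h
  exact_mod_cast h

theorem re_diag_conj_diagonal (W : Matrix n n 𝕜) (d : n → ℝ) (i : n) :
    RCLike.re ((star W * diagonal (RCLike.ofReal ∘ d) * W : Matrix n n 𝕜) i i)
      = ∑ j, ‖W j i‖ ^ 2 * d j := by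
  rw [mul_apply, map_sum]
  refine sum_congr rfl fun j _ => ?_
  rw [mul_diagonal, star_apply, RCLike.star_def, Function.comp_apply, mul_right_comm,
    RCLike.conj_mul]
  norm_cast

theorem IsHermitian.exp_eq_cfc {A : Matrix n n 𝕜} (hA : A.IsHermitian) :
    NormedSpace.exp A = hA.cfc Real.exp := by
  conv_lhs => rw [hA.spectral_theorem, Unitary.conjStarAlgAut_apply]
  rw [IsHermitian.cfc, Unitary.conjStarAlgAut_apply]
  refine (exp_units_conj (Unitary.toUnits hA.eigenvectorUnitary) _).trans ?_
  rw [exp_diagonal]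
  congr 3
  funext j
  simp only [Pi.coe_exp, Function.comp_apply, Real.exp_eq_exp_ℝ]
  exact (algebraMap_exp_comm (𝕂 := ℝ) (𝔸 := 𝕜) _).symm

theorem IsHermitian.re_trace_exp {A : Matrix n n 𝕜} (hA : A.IsHermitian) :
    RCLike.re (trace (NormedSpace.exp A)) = ∑ i, Real.exp (hA.eigenvalues i) := by
  rw [hA.exp_eq_cfc, IsHermitian.cfc, Unitary.conjStarAlgAut_apply, trace_mul_cycle,
    Unitary.coe_star_mul_self, one_mul, trace_diagonal, map_sum]
  simp

theorem IsHermitian.re_diag_conj_eigenvectorUnitary {A : Matrix n n 𝕜} (hA : A.IsHermitian)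
    (i : n) :
    RCLike.re ((star (hA.eigenvectorUnitary : Matrix n n 𝕜) * A * hA.eigenvectorUnitary) i i)
      = hA.eigenvalues i := by
  have h := hA.conjStarAlgAut_star_eigenvectorUnitary
  rw [Unitary.conjStarAlgAut_star_apply] at h
  simp [h]

/-- Peierls' inequality. With `V` diagonalising `A`, the matrix `‖(Vᴴ U) j i‖ ^ 2` is doubly
stochastic, so Jensen's inequality applies to each diagonal entry of `Uᴴ A U`. -/
theorem IsHermitian.sum_map_re_diag_conj_le {A : Matrix n n 𝕜} (hA : A.IsHermitian)
    {f : ℝ → ℝ} (hf : ConvexOn ℝ Set.univ f) {U : Matrix n n 𝕜} (hU : U ∈ unitaryGroup n 𝕜) :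
    ∑ i, f (RCLike.re ((star U * A * U) i i)) ≤ ∑ j, f (hA.eigenvalues j) := by
  set V : Matrix n n 𝕜 := (hA.eigenvectorUnitary : Matrix n n 𝕜)
  set W : Matrix n n 𝕜 := star V * U
  have hW : W ∈ unitaryGroup n 𝕜 := mul_mem (Unitary.star_mem hA.eigenvectorUnitary.2) hU
  have hconj : star U * A * U = star W * diagonal (RCLike.ofReal ∘ hA.eigenvalues) * W := by
    conv_lhs => rw [hA.spectral_theorem, Unitary.conjStarAlgAut_apply]
    simp only [W, V, star_mul, star_star, mul_assoc]
  calc ∑ i, f (RCLike.re ((star U * A * U) i i))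
      = ∑ i, f (∑ j, ‖W j i‖ ^ 2 • hA.eigenvalues j) := by
        simp only [hconj, re_diag_conj_diagonal, smul_eq_mul]
    _ ≤ ∑ i, ∑ j, ‖W j i‖ ^ 2 • f (hA.eigenvalues j) := by
        gcongr with i
        exact hf.map_sum_le (fun j _ => by positivity)
          (sum_norm_sq_apply_eq_one_of_mem_unitaryGroup hW i) fun j _ => Set.mem_univ _
    _ = ∑ j, f (hA.eigenvalues j) := by
        rw [sum_comm]
        refine sum_congr rfl fun j _ => ?_
        have hrow := sum_norm_sq_apply_eq_one_of_mem_unitaryGroup (Unitary.star_mem hW) j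
        simp only [star_apply, RCLike.star_def, RCLike.norm_conj] at hrow
        rw [← sum_smul, hrow, one_smul]

end Matrix

/-- Convexity of the logarithmic trace-exponential on Hermitian matrices. -/
theorem log_trace_exp_convex
    {n : Type*} [Fintype n] [DecidableEq n] [Nonempty n]
    (A B : Matrix n n ℂ) (hA : Aᴴ = A) (hB : Bᴴ = B)
    (t : ℝ) (ht : t ∈ Set.Icc (0 : ℝ) 1) :
    Real.log (trace (exp (t • A + (1 - t) • B))).re ≤
      t * Real.log (trace (exp A)).re + (1 - t) * Real.log (trace (exp B)).re := by
  obtain ⟨ht0, ht1⟩ := ht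
  have hC : (t • A + (1 - t) • B).IsHermitian :=
    (IsHermitian.smul hA (.all t)).add (IsHermitian.smul hB (.all (1 - t)))
  set U : Matrix n n ℂ := (hC.eigenvectorUnitary : Matrix n n ℂ)
  set a : n → ℝ := fun i => ((star U * A * U) i i).re
  set b : n → ℝ := fun i => ((star U * B * U) i i).re
  have heig : hC.eigenvalues = t • a + (1 - t) • b := by
    funext i
    rw [← hC.re_diag_conj_eigenvectorUnitary]
    simp [a, b, U, mul_add, add_mul]
  calc Real.log (trace (exp (t • A + (1 - t) • B))).re
      = Real.log (∑ i, Real.exp ((t • a + (1 - t) • b) i)) := by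
        rw [← RCLike.re_to_complex, hC.re_trace_exp, heig]
    _ ≤ t * Real.log (∑ i, Real.exp (a i)) + (1 - t) * Real.log (∑ i, Real.exp (b i)) :=
        Real.convexOn_log_sum_exp.2 (Set.mem_univ a) (Set.mem_univ b) ht0 (by linarith)
          (by ring)
    _ ≤ t * Real.log (trace (exp A)).re + (1 - t) * Real.log (trace (exp B)).re := by
        rw [← RCLike.re_to_complex, ← RCLike.re_to_complex, IsHermitian.re_trace_exp hA,
          IsHermitian.re_trace_exp hB]
        gcongr t * Real.log ?_ + (1 - t) * Real.log ?_
        · exact IsHermitian.sum_map_re_diag_conj_le hA convexOn_exp hC.eigenvectorUnitary.2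
        · exact IsHermitian.sum_map_re_diag_conj_le hB convexOn_exp hC.eigenvectorUnitary.2
end

section
/- Liouville equation with source for the NESOM-2 statistical operator (constant Hamiltonian): let H be a Hermitian n×n complex matrix, ε > 0, and let ρ_q : ℝ → Matrix n n ℂ be continuous and bounded. Define ρ_ε : ℝ → Matrix n n ℂ by ρ_ε(t) = ε • ∫_{−∞}^{t} e^{ε(s−t)} • (exp(−(i(t−s)) • H) * ρ_q(s) * exp((i(t−s)) • H)) ds. Then ρ_ε is differentiable and for every t: ρ_ε'(t) + i • (H * ρ_ε(t) − ρ_ε(t) * H) = ε • (ρ_q(t) − ρ_ε(t)). -/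
open Matrix NormedSpace MeasureTheory

attribute [local instance] Matrix.linftyOpNormedRing Matrix.linftyOpNormedAlgebra

/-!
In the interaction picture `ρ_ε(t) = e^{-itH} σ(t) e^{itH}`, the operator `σ` is the exponential
moving average `σ(t) = ε ∫_{-∞}^t e^{ε(s-t)} f(s) ds` of `f(s) = e^{isH} ρ_q(s) e^{-isH}`.
Since `e^{isH}` is unitary, `f` is bounded and continuous, so the fundamental theorem of calculus
gives `σ' = ε (f - σ)`. Differentiating the conjugation by `e^{-itH}` adds the commutator
`-i [H, ρ_ε(t)]`, and conjugating `f(t)` back gives `ρ_q(t)`.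
-/

open Set

theorem hasDerivAt_setIntegral_Iic {E : Type*} [NormedAddCommGroup E] [NormedSpace ℝ E]
    [CompleteSpace E] {g : ℝ → E} (hg : Continuous g) (hint : ∀ τ, IntegrableOn g (Iic τ))
    (t : ℝ) : HasDerivAt (fun τ => ∫ s in Iic τ, g s) (g t) t := by
  have hsplit : (fun τ => ∫ s in Iic τ, g s) =
      fun τ => (∫ s in Iic 0, g s) + ∫ s in (0 : ℝ)..τ, g s := by
    funext τ
    rw [← intervalIntegral.integral_Iic_sub_Iic (hint 0) (hint τ)]
    abel
  rw [hsplit]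
  exact (hg.integral_hasStrictDerivAt 0 t).hasDerivAt.const_add _

section ExpMovingAverage

variable {E : Type*} [NormedAddCommGroup E] [NormedSpace ℝ E] {ε : ℝ} {f : ℝ → E}

noncomputable def expMovingAverage (ε : ℝ) (f : ℝ → E) (t : ℝ) : E :=
  ε • ∫ s in Iic t, Real.exp (ε * (s - t)) • f s

theorem integrableOn_exp_mul_sub_smul_Iic (hε : 0 < ε) (hf : AEStronglyMeasurable f)
    (hfb : ∃ C, ∀ s, ‖f s‖ ≤ C) (c τ : ℝ) :
    IntegrableOn (fun s => Real.exp (ε * (s - c)) • f s) (Iic τ) := by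
  obtain ⟨C, hC⟩ := hfb
  have hexp : IntegrableOn (fun s => Real.exp (ε * (s - c))) (Iic τ) := by
    have h := (integrableOn_exp_mul_Iic hε τ).div_const (Real.exp (ε * c))
    simp only [← Real.exp_sub, ← mul_sub] at h
    exact h
  refine (hexp.mul_const C).mono'
    ((by fun_prop : Continuous fun s => Real.exp (ε * (s - c))).aestronglyMeasurable.smul
      hf).restrict (ae_of_all _ fun s => ?_)
  rw [norm_smul, Real.norm_of_nonneg (Real.exp_pos _).le]
  exact mul_le_mul_of_nonneg_left (hC s) (Real.exp_pos _).le

theorem expMovingAverage_eq_smul_integral (ε : ℝ) (f : ℝ → E) (t : ℝ) :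
    expMovingAverage ε f t =
      (ε * Real.exp (-(ε * t))) • ∫ s in Iic t, Real.exp (ε * s) • f s := by
  have hfactor : ∀ s, Real.exp (ε * (s - t)) • f s =
      Real.exp (-(ε * t)) • (Real.exp (ε * s) • f s) := fun s => by
    rw [smul_smul, ← Real.exp_add]
    ring_nf
  simp_rw [expMovingAverage, hfactor, integral_smul, smul_smul]

theorem hasDerivAt_expMovingAverage [CompleteSpace E] (hε : 0 < ε) (hf : Continuous f)
    (hfb : ∃ C, ∀ s, ‖f s‖ ≤ C) (t : ℝ) :
    HasDerivAt (expMovingAverage ε f) (ε • (f t - expMovingAverage ε f t)) t := by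
  have hint : ∀ τ, IntegrableOn (fun s => Real.exp (ε * s) • f s) (Iic τ) := fun τ => by
    simpa using integrableOn_exp_mul_sub_smul_Iic hε hf.aestronglyMeasurable hfb 0 τ
  have hG := hasDerivAt_setIntegral_Iic (by fun_prop) hint t
  have hφ : HasDerivAt (fun τ => ε * Real.exp (-(ε * τ)))
      (ε * (Real.exp (-(ε * t)) * -ε)) t := by
    simpa using (((hasDerivAt_id t).const_mul ε).neg.exp).const_mul ε
  rw [funext (expMovingAverage_eq_smul_integral ε f)]
  refine (hφ.smul hG).congr_deriv ?_
  have hcancel : ε * Real.exp (-(ε * t)) * Real.exp (ε * t) = ε := by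
    rw [mul_assoc, ← Real.exp_add, neg_add_cancel, Real.exp_zero, mul_one]
  rw [smul_smul, hcancel]
  module

theorem ContinuousLinearMap.map_expMovingAverage {𝕜 F : Type*} [RCLike 𝕜] [NormedSpace 𝕜 E]
    [IsScalarTower ℝ 𝕜 E] [NormedAddCommGroup F] [NormedSpace ℝ F] [NormedSpace 𝕜 F]
    [IsScalarTower ℝ 𝕜 F] [CompleteSpace E] [CompleteSpace F] (L : E →L[𝕜] F) (hε : 0 < ε)
    (hf : Continuous f) (hfb : ∃ C, ∀ s, ‖f s‖ ≤ C) (t : ℝ) :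
    L (expMovingAverage ε f t) = expMovingAverage ε (fun s => L (f s)) t := by
  simp only [expMovingAverage, map_smul_of_tower,
    ← L.integral_comp_comm (integrableOn_exp_mul_sub_smul_Iic hε hf.aestronglyMeasurable hfb t t)]

end ExpMovingAverage

namespace Matrix

variable {n : Type*} [Fintype n] [DecidableEq n]

theorem linfty_opNorm_le_card_of_mem_unitaryGroup {𝕜 : Type*} [RCLike 𝕜] {U : Matrix n n 𝕜}
    (hU : U ∈ unitaryGroup n 𝕜) : ‖U‖ ≤ Fintype.card n := by
  rw [linfty_opNorm_def, ← NNReal.coe_natCast, NNReal.coe_le_coe]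
  refine Finset.sup_le fun i _ => ?_
  calc ∑ j, ‖U i j‖₊ ≤ ∑ _j : n, (1 : NNReal) :=
        Finset.sum_le_sum fun j _ => entry_norm_bound_of_unitary hU i j
    _ = Fintype.card n := by simp

theorem exp_mem_unitaryGroup_of_mem_skewAdjoint {X : Matrix n n ℂ}
    (hX : X ∈ skewAdjoint (Matrix n n ℂ)) : exp X ∈ unitaryGroup n ℂ := by
  rw [Unitary.mem_iff, star_eq_conjTranspose, ← exp_conjTranspose, ← star_eq_conjTranspose,
    skewAdjoint.mem_iff.mp hX, ← exp_add_of_commute _ _ (Commute.refl X).neg_left,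
    ← exp_add_of_commute _ _ (Commute.refl X).neg_right, neg_add_cancel, add_neg_cancel,
    exp_zero, and_self]

theorem exp_add_smul (H : Matrix n n ℂ) (a b : ℂ) :
    exp ((a + b) • H) = exp (a • H) * exp (b • H) := by
  rw [add_smul]
  exact exp_add_of_commute _ _ (((Commute.refl H).smul_left a).smul_right b)

theorem hasDerivAt_exp_ofReal_mul_smul (H : Matrix n n ℂ) (c : ℂ) (t : ℝ) :
    HasDerivAt (fun τ : ℝ => exp ((c * τ) • H)) (c • (exp ((c * t) • H) * H)) t :=
  HasDerivAt.scomp_of_eq t (hasDerivAt_exp_smul_const (𝕂 := ℂ) H (c * t))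
    (by simpa using (Complex.ofRealCLM.hasDerivAt (x := t)).const_mul c) rfl

theorem IsHermitian.norm_exp_I_mul_smul_le_card {H : Matrix n n ℂ} (hH : H.IsHermitian)
    (τ : ℝ) : ‖NormedSpace.exp ((Complex.I * τ) • H)‖ ≤ Fintype.card n := by
  have hIτ : Complex.I * τ ∈ skewAdjoint ℂ := by
    simp [skewAdjoint.mem_iff, Complex.conj_ofReal]
  exact linfty_opNorm_le_card_of_mem_unitaryGroup
    (exp_mem_unitaryGroup_of_mem_skewAdjoint (hH.isSelfAdjoint.smul_mem_skewAdjoint hIτ))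

end Matrix

section Heisenberg

variable {n : Type*} [Fintype n] [DecidableEq n] (H : Matrix n n ℂ)

noncomputable def heisenberg (τ : ℝ) : Matrix n n ℂ →L[ℂ] Matrix n n ℂ :=
  ContinuousLinearMap.mulLeftRight ℂ _ (exp ((-(Complex.I * τ)) • H)) (exp ((Complex.I * τ) • H))

theorem heisenberg_apply (τ : ℝ) (X : Matrix n n ℂ) :
    heisenberg H τ X = exp ((-(Complex.I * τ)) • H) * X * exp ((Complex.I * τ) • H) :=
  rfl

theorem heisenberg_add (τ σ : ℝ) (X : Matrix n n ℂ) :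
    heisenberg H (τ + σ) X = heisenberg H τ (heisenberg H σ X) := by
  have hU : exp ((-(Complex.I * ↑(τ + σ))) • H) =
      exp ((-(Complex.I * τ)) • H) * exp ((-(Complex.I * σ)) • H) := by
    rw [← exp_add_smul]; congr 2; push_cast; ring
  have hV : exp ((Complex.I * ↑(τ + σ)) • H) =
      exp ((Complex.I * σ) • H) * exp ((Complex.I * τ) • H) := by
    rw [← exp_add_smul]; congr 2; push_cast; ring
  simp only [heisenberg_apply, hU, hV, mul_assoc]

theorem heisenberg_zero (X : Matrix n n ℂ) : heisenberg H 0 X = X := by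
  simp [heisenberg_apply]

theorem heisenberg_heisenberg_neg (τ : ℝ) (X : Matrix n n ℂ) :
    heisenberg H τ (heisenberg H (-τ) X) = X := by
  rw [← heisenberg_add, add_neg_cancel, heisenberg_zero]

theorem hasDerivAt_heisenberg {X : ℝ → Matrix n n ℂ} {X' : Matrix n n ℂ} {t : ℝ}
    (hX : HasDerivAt X X' t) :
    HasDerivAt (fun τ => heisenberg H τ (X τ))
      (heisenberg H t X' -
        Complex.I • (H * heisenberg H t (X t) - heisenberg H t (X t) * H)) t := by
  have hU := hasDerivAt_exp_ofReal_mul_smul H (-Complex.I) t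
  have hV := hasDerivAt_exp_ofReal_mul_smul H Complex.I t
  simp only [neg_mul] at hU
  refine ((hU.mul hX).mul hV).congr_deriv ?_
  have hcomm : exp ((-(Complex.I * t)) • H) * H = H * exp ((-(Complex.I * t)) • H) :=
    ((Commute.refl H).smul_right _).exp_right.symm.eq
  simp only [heisenberg_apply, Pi.mul_apply, add_mul, smul_mul_assoc, mul_smul_comm, hcomm,
    mul_assoc]
  module

theorem Matrix.IsHermitian.norm_heisenberg_le {H : Matrix n n ℂ} (hH : H.IsHermitian) (τ : ℝ)
    (X : Matrix n n ℂ) : ‖heisenberg H τ X‖ ≤ Fintype.card n * ‖X‖ * Fintype.card n := by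
  have hU : ‖NormedSpace.exp ((-(Complex.I * τ)) • H)‖ ≤ Fintype.card n := by
    simpa using hH.norm_exp_I_mul_smul_le_card (-τ)
  rw [heisenberg_apply]
  refine (norm_mul_le _ _).trans (mul_le_mul ((norm_mul_le _ _).trans ?_)
    (hH.norm_exp_I_mul_smul_le_card τ) (norm_nonneg _) (by positivity))
  exact mul_le_mul_of_nonneg_right hU (norm_nonneg _)

theorem heisenberg_expMovingAverage {ε : ℝ} (hε : 0 < ε) {X : ℝ → Matrix n n ℂ}
    (hf : Continuous fun s => heisenberg H (-s) (X s))
    (hfb : ∃ C, ∀ s, ‖heisenberg H (-s) (X s)‖ ≤ C) (t : ℝ) :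
    heisenberg H t (expMovingAverage ε (fun s => heisenberg H (-s) (X s)) t) =
      ε • ∫ s in Iic t, Real.exp (ε * (s - t)) •
        (exp ((-(Complex.I * ((t : ℂ) - (s : ℂ)))) • H) * X s *
          exp ((Complex.I * ((t : ℂ) - (s : ℂ))) • H)) := by
  refine ((heisenberg H t).map_expMovingAverage hε hf hfb t).trans ?_
  simp only [expMovingAverage]
  congr 1
  refine setIntegral_congr_fun measurableSet_Iic fun s _ => congrArg _ ?_
  -- `map_expMovingAverage` reaches `ℂ` through `RCLike`; `show` restores the default instances
  show heisenberg H t (heisenberg H (-s) (X s)) = _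
  rw [← heisenberg_add, ← sub_eq_add_neg, heisenberg_apply, Complex.ofReal_sub]

end Heisenberg

theorem neso2_liouville_with_source_general
    {n : Type*} [Fintype n] [DecidableEq n]
    (H : Matrix n n ℂ) (hH : Hᴴ = H)
    (ε : ℝ) (hε : 0 < ε)
    (ρq : ℝ → Matrix n n ℂ) (hqc : Continuous ρq)
    (hqb : ∃ C : ℝ, ∀ s : ℝ, ‖ρq s‖ ≤ C)
    (ρε : ℝ → Matrix n n ℂ)
    (hρε : ∀ t : ℝ, ρε t = ε • ∫ s in Set.Iic t, Real.exp (ε * (s - t)) •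
      (exp ((-(Complex.I * ((t : ℂ) - (s : ℂ)))) • H) * ρq s *
        exp ((Complex.I * ((t : ℂ) - (s : ℂ))) • H))) :
    ∀ t : ℝ, HasDerivAt ρε
      (ε • (ρq t - ρε t) - Complex.I • (H * ρε t - ρε t * H)) t := by
  obtain ⟨C, hC⟩ := hqb
  set f : ℝ → Matrix n n ℂ := fun s => heisenberg H (-s) (ρq s)
  have hf : Continuous f := by simp only [f, heisenberg_apply]; fun_prop
  have hfb : ∃ C', ∀ s, ‖f s‖ ≤ C' :=
    ⟨Fintype.card n * C * Fintype.card n, fun s =>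
      (Matrix.IsHermitian.norm_heisenberg_le hH _ _).trans (by gcongr; exact hC s)⟩
  have hρ : ρε = fun τ => heisenberg H τ (expMovingAverage ε f τ) :=
    funext fun t => (hρε t).trans (heisenberg_expMovingAverage H hε hf hfb t).symm
  intro t
  have hderiv := hasDerivAt_heisenberg H (hasDerivAt_expMovingAverage hε hf hfb t)
  rwa [ContinuousLinearMap.map_smul_of_tower, map_sub, heisenberg_heisenberg_neg,
    ← congrFun hρ t, ← hρ] at hderiv

/-- Liouville equation with source for the NESOM-2 statistical operator, for a
time-independent Hamiltonian `H`: the quasi-invariant `ρ_ε` built from the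
quasi-equilibrium operator `ρ_q` satisfies
`ρ_ε' + i [H, ρ_ε] = ε (ρ_q - ρ_ε)`. -/
theorem neso2_liouville_with_source
    {n : Type*} [Fintype n] [DecidableEq n] [Nonempty n]
    (H : Matrix n n ℂ) (hH : Hᴴ = H)
    (ε : ℝ) (hε : 0 < ε)
    (ρq : ℝ → Matrix n n ℂ) (hqc : Continuous ρq)
    (hqb : ∃ C : ℝ, ∀ s : ℝ, ‖ρq s‖ ≤ C)
    (ρε : ℝ → Matrix n n ℂ)
    (hρε : ∀ t : ℝ, ρε t = ε • ∫ s in Set.Iic t, Real.exp (ε * (s - t)) •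
      (exp ((-(Complex.I * ((t : ℂ) - (s : ℂ)))) • H) * ρq s *
        exp ((Complex.I * ((t : ℂ) - (s : ℂ))) • H))) :
    ∀ t : ℝ, HasDerivAt ρε
      (ε • (ρq t - ρε t) - Complex.I • (H * ρε t - ρε t * H)) t :=
  neso2_liouville_with_source_general H hH ε hε ρq hqc hqb ρε hρε
end

section
/- Evolution identity for the NESOM-2 statistical operator (constant Hamiltonian): let H be a Hermitian n×n complex matrix, ε > 0, let ρ_q : ℝ → Matrix n n ℂ be continuous and bounded, and define ρ_ε(t) = ε • ∫_{−∞}^{t} e^{ε(s−t)} • (exp(−(i(t−s)) • H) * ρ_q(s) * exp((i(t−s)) • H)) ds. Then for all t₀ ≤ t: e^{ε(t−t₀)} • (exp(−(i(t₀−t)) • H) * ρ_ε(t) * exp((i(t₀−t)) • H)) = ρ_ε(t₀) + ε • ∫_{t₀}^{t} e^{ε(s−t₀)} • (exp(−(i(t₀−s)) • H) * ρ_q(s) * exp((i(t₀−s)) • H)) ds. -/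
open Matrix NormedSpace MeasureTheory

attribute [local instance] Matrix.linftyOpNormedRing Matrix.linftyOpNormedAlgebra

/-!
Write `U(τ) = exp(iτH)` and `f(s) = e^{εs} U(s) ρ_q(s) U(-s)`. The group law of `U` factors the
integrand of `ρ_ε(t)` as `e^{ε(s-t)} U(s-t) ρ_q(s) U(t-s) = e^{-εt} U(-t) f(s) U(t)`, so
`ρ_ε(t) = ε e^{-εt} U(-t) (∫_{-∞}^t f) U(t)`. Evolving back to `t₀` turns this into
`ε e^{-εt₀} U(-t₀) (∫_{-∞}^t f) U(t₀)`, and the identity is the splitting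
`∫_{-∞}^t f = ∫_{-∞}^{t₀} f + ∫_{t₀}^t f`, which is legitimate because `U` is unitary and `ε > 0`,
so `‖f(s)‖ = O(e^{εs})`.
-/

open Set

namespace AddChar

theorem mul_map_neg {M : Type*} [Monoid M] (U : AddChar ℝ M) (τ : ℝ) : U τ * U (-τ) = 1 := by
  rw [← map_add_eq_mul, add_neg_cancel, map_zero_eq_one]

theorem map_neg_mul {M : Type*} [Monoid M] (U : AddChar ℝ M) (τ : ℝ) : U (-τ) * U τ = 1 := by
  rw [← map_add_eq_mul, neg_add_cancel, map_zero_eq_one]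

variable {A : Type*} [NormedRing A] [NormedAlgebra ℝ A]

-- An equivalence, so that it commutes with Bochner integrals without integrability assumptions.
noncomputable def evolve (U : AddChar ℝ A) (τ : ℝ) : A ≃L[ℝ] A :=
  .equivOfInverse (ContinuousLinearMap.mulLeftRight ℝ A (U (-τ)) (U τ))
    (ContinuousLinearMap.mulLeftRight ℝ A (U τ) (U (-τ)))
    (fun X => by
      simp only [ContinuousLinearMap.mulLeftRight_apply, mul_assoc]
      rw [mul_map_neg, mul_one, ← mul_assoc, mul_map_neg, one_mul])
    (fun X => by
      simp only [ContinuousLinearMap.mulLeftRight_apply, mul_assoc]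
      rw [map_neg_mul, mul_one, ← mul_assoc, map_neg_mul, one_mul])

theorem evolve_apply (U : AddChar ℝ A) (τ : ℝ) (X : A) : U.evolve τ X = U (-τ) * X * U τ :=
  rfl

theorem evolve_evolve (U : AddChar ℝ A) (a b : ℝ) (X : A) :
    U.evolve a (U.evolve b X) = U.evolve (a + b) X := by
  rw [evolve_apply, evolve_apply, evolve_apply, neg_add, map_add_eq_mul, add_comm a b,
    map_add_eq_mul]
  simp only [mul_assoc]

theorem norm_evolve_le {U : AddChar ℝ A} {K : ℝ} (hU : ∀ τ, ‖U τ‖ ≤ K) (τ : ℝ) (X : A) :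
    ‖U.evolve τ X‖ ≤ K ^ 2 * ‖X‖ := by
  have hK : 0 ≤ K := (norm_nonneg _).trans (hU 0)
  calc ‖U.evolve τ X‖ ≤ ‖U (-τ)‖ * ‖X‖ * ‖U τ‖ := by
        rw [evolve_apply]
        exact (norm_mul_le _ _).trans (mul_le_mul_of_nonneg_right (norm_mul_le _ _) (norm_nonneg _))
    _ ≤ K * ‖X‖ * K := by gcongr <;> exact hU _
    _ = K ^ 2 * ‖X‖ := by ring

noncomputable def interactionSource (U : AddChar ℝ A) (ε : ℝ) (ρq : ℝ → A) (s : ℝ) : A :=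
  Real.exp (ε * s) • U.evolve (-s) (ρq s)

theorem continuous_interactionSource {U : AddChar ℝ A} (hU : Continuous U) (ε : ℝ) {ρq : ℝ → A}
    (hρq : Continuous ρq) : Continuous (U.interactionSource ε ρq) := by
  unfold interactionSource
  simp only [evolve_apply, neg_neg]
  fun_prop

theorem norm_interactionSource_le {U : AddChar ℝ A} {K : ℝ} (hU : ∀ τ, ‖U τ‖ ≤ K) (ε : ℝ)
    {ρq : ℝ → A} {C : ℝ} (hC : ∀ s, ‖ρq s‖ ≤ C) (s : ℝ) :
    ‖U.interactionSource ε ρq s‖ ≤ Real.exp (ε * s) * (K ^ 2 * C) := by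
  rw [interactionSource, norm_smul, Real.norm_of_nonneg (Real.exp_pos _).le]
  gcongr
  exact (norm_evolve_le hU _ _).trans (by gcongr; exact hC s)

theorem smul_evolve_eq_smul_evolve_interactionSource (U : AddChar ℝ A) (ε : ℝ) (ρq : ℝ → A)
    (t s : ℝ) :
    Real.exp (ε * (s - t)) • U.evolve (t - s) (ρq s)
      = Real.exp (-(ε * t)) • U.evolve t (U.interactionSource ε ρq s) := by
  rw [interactionSource, map_smul, evolve_evolve, smul_smul, ← Real.exp_add, ← sub_eq_add_neg,
    mul_sub, neg_add_eq_sub, sub_eq_neg_add (ε * s)]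

theorem setIntegral_smul_evolve [CompleteSpace A] (U : AddChar ℝ A) (ε : ℝ) (ρq : ℝ → A)
    (S : Set ℝ) (t : ℝ) :
    ∫ s in S, Real.exp (ε * (s - t)) • U.evolve (t - s) (ρq s)
      = Real.exp (-(ε * t)) • U.evolve t (∫ s in S, U.interactionSource ε ρq s) := by
  simp_rw [smul_evolve_eq_smul_evolve_interactionSource]
  rw [integral_smul, (U.evolve t).integral_comp_comm]

end AddChar

theorem integrableOn_Iic_of_norm_le_exp_mul {E : Type*} [NormedAddCommGroup E] {f : ℝ → E}
    (hf : Continuous f) {ε C : ℝ} (hε : 0 < ε) (hfC : ∀ s, ‖f s‖ ≤ Real.exp (ε * s) * C)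
    (t : ℝ) : IntegrableOn f (Iic t) :=
  ((integrableOn_exp_mul_Iic hε t).mul_const C).mono' hf.aestronglyMeasurable.restrict
    (Filter.Eventually.of_forall hfC)

theorem Matrix.linfty_opNorm_le_card_of_mem_unitaryGroup_s12 {𝕜 n : Type*} [RCLike 𝕜] [Fintype n]
    [DecidableEq n] {U : Matrix n n 𝕜} (hU : U ∈ unitaryGroup n 𝕜) :
    ‖U‖ ≤ Fintype.card n := by
  rw [← coe_nnnorm, linfty_opNNNorm_def, ← NNReal.coe_natCast, NNReal.coe_le_coe]
  refine Finset.sup_le fun i _ => ?_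
  calc ∑ j, ‖U i j‖₊ ≤ ∑ _j : n, (1 : NNReal) :=
        Finset.sum_le_sum fun j _ => entry_norm_bound_of_unitary hU i j
    _ = Fintype.card n := by simp

namespace Matrix

variable {n : Type*} [Fintype n] [DecidableEq n]

noncomputable def flow (H : Matrix n n ℂ) : AddChar ℝ (Matrix n n ℂ) where
  toFun τ := exp ((Complex.I * τ) • H)
  map_zero_eq_one' := by simp
  map_add_eq_mul' a b := by
    rw [Complex.ofReal_add, mul_add, add_smul,
      Matrix.exp_add_of_commute _ _ (((Commute.refl H).smul_left _).smul_right _)]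

theorem flow_apply (H : Matrix n n ℂ) (τ : ℝ) : flow H τ = exp ((Complex.I * τ) • H) :=
  rfl

theorem continuous_flow (H : Matrix n n ℂ) : Continuous (flow H) :=
  exp_continuous.comp ((continuous_const.mul Complex.continuous_ofReal).smul continuous_const)

theorem conjTranspose_flow {H : Matrix n n ℂ} (hH : H.IsHermitian) (τ : ℝ) :
    (flow H τ)ᴴ = flow H (-τ) := by
  rw [flow_apply, flow_apply, ← exp_conjTranspose, conjTranspose_smul, hH.eq, star_mul',
    Complex.star_def, Complex.conj_I, Complex.conj_ofReal, Complex.ofReal_neg, mul_neg, neg_mul]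

theorem flow_mem_unitaryGroup {H : Matrix n n ℂ} (hH : H.IsHermitian) (τ : ℝ) :
    flow H τ ∈ unitaryGroup n ℂ := by
  rw [Unitary.mem_iff, star_eq_conjTranspose, conjTranspose_flow hH, AddChar.map_neg_mul,
    AddChar.mul_map_neg, and_self]

theorem exp_mul_mul_exp_eq_evolve_flow (H X : Matrix n n ℂ) (a b : ℝ) :
    exp ((-(Complex.I * ((a : ℂ) - (b : ℂ)))) • H) * X * exp ((Complex.I * ((a : ℂ) - (b : ℂ))) • H)
      = (flow H).evolve (a - b) X := by
  simp only [AddChar.evolve_apply, flow_apply, Complex.ofReal_neg, Complex.ofReal_sub, mul_neg]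

end Matrix

theorem neso2_evolution_identity_general
    {n : Type*} [Fintype n] [DecidableEq n]
    (H : Matrix n n ℂ) (hH : Hᴴ = H)
    (ε : ℝ) (hε : 0 < ε)
    (ρq : ℝ → Matrix n n ℂ) (hqc : Continuous ρq)
    (hqb : ∃ C : ℝ, ∀ s : ℝ, ‖ρq s‖ ≤ C)
    (ρε : ℝ → Matrix n n ℂ)
    (hρε : ∀ t : ℝ, ρε t = ε • ∫ s in Set.Iic t, Real.exp (ε * (s - t)) •
      (exp ((-(Complex.I * ((t : ℂ) - (s : ℂ)))) • H) * ρq s *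
        exp ((Complex.I * ((t : ℂ) - (s : ℂ))) • H))) :
    ∀ t₀ t : ℝ, t₀ ≤ t →
      Real.exp (ε * (t - t₀)) •
        (exp ((-(Complex.I * ((t₀ : ℂ) - (t : ℂ)))) • H) * ρε t *
          exp ((Complex.I * ((t₀ : ℂ) - (t : ℂ))) • H)) =
      ρε t₀ + ε • ∫ s in t₀..t, Real.exp (ε * (s - t₀)) •
        (exp ((-(Complex.I * ((t₀ : ℂ) - (s : ℂ)))) • H) * ρq s *
          exp ((Complex.I * ((t₀ : ℂ) - (s : ℂ))) • H)) := by
  intro t₀ t ht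
  obtain ⟨C, hC⟩ := hqb
  set U := flow H
  have hsource := integrableOn_Iic_of_norm_le_exp_mul
    (U.continuous_interactionSource (continuous_flow H) ε hqc) hε
    (U.norm_interactionSource_le
      (fun τ => linfty_opNorm_le_card_of_mem_unitaryGroup_s12 (flow_mem_unitaryGroup hH τ)) ε hC)
  have hρ (a : ℝ) : ρε a = ε • Real.exp (-(ε * a)) • U.evolve a
      (∫ s in Iic a, U.interactionSource ε ρq s) := by
    rw [hρε]
    simp_rw [exp_mul_mul_exp_eq_evolve_flow]
    rw [U.setIntegral_smul_evolve]
  have hsplit := intervalIntegral.integral_Iic_sub_Iic (hsource t₀) (hsource t)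
  simp_rw [exp_mul_mul_exp_eq_evolve_flow]
  rw [intervalIntegral.integral_of_le ht, U.setIntegral_smul_evolve,
    ← intervalIntegral.integral_of_le ht, ← hsplit, hρ, hρ, map_smul, map_smul, U.evolve_evolve,
    sub_add_cancel, map_sub, smul_sub, smul_sub, add_sub_cancel]
  simp only [smul_smul]
  rw [mul_left_comm, ← Real.exp_add, show ε * (t - t₀) + -(ε * t) = -(ε * t₀) by ring]

/-- Evolution identity for the NESOM-2 statistical operator (constant Hamiltonian):
propagating `ρ_ε(t)` backwards to time `t₀` reproduces `ρ_ε(t₀)` plus a weighted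
integral of evolved quasi-equilibrium operators. -/
theorem neso2_evolution_identity
    {n : Type*} [Fintype n] [DecidableEq n] [Nonempty n]
    (H : Matrix n n ℂ) (hH : Hᴴ = H)
    (ε : ℝ) (hε : 0 < ε)
    (ρq : ℝ → Matrix n n ℂ) (hqc : Continuous ρq)
    (hqb : ∃ C : ℝ, ∀ s : ℝ, ‖ρq s‖ ≤ C)
    (ρε : ℝ → Matrix n n ℂ)
    (hρε : ∀ t : ℝ, ρε t = ε • ∫ s in Set.Iic t, Real.exp (ε * (s - t)) •
      (exp ((-(Complex.I * ((t : ℂ) - (s : ℂ)))) • H) * ρq s *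
        exp ((Complex.I * ((t : ℂ) - (s : ℂ))) • H))) :
    ∀ t₀ t : ℝ, t₀ ≤ t →
      Real.exp (ε * (t - t₀)) •
        (exp ((-(Complex.I * ((t₀ : ℂ) - (t : ℂ)))) • H) * ρε t *
          exp ((Complex.I * ((t₀ : ℂ) - (t : ℂ))) • H)) =
      ρε t₀ + ε • ∫ s in t₀..t, Real.exp (ε * (s - t₀)) •
        (exp ((-(Complex.I * ((t₀ : ℂ) - (s : ℂ)))) • H) * ρq s *
          exp ((Complex.I * ((t₀ : ℂ) - (s : ℂ))) • H)) :=
  neso2_evolution_identity_general H hH ε hε ρq hqc hqb ρε hρε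
end

section
/- The differential balance equations follow from the self-consistency balance equations in NESOM-2 (constant Hamiltonian): let H and P be Hermitian n×n complex matrices, ε > 0, and let ρ_ε, ρ_q : ℝ → Matrix n n ℂ with ρ_ε differentiable and satisfying ρ_ε'(t) + i • (H * ρ_ε(t) − ρ_ε(t) * H) = ε • (ρ_q(t) − ρ_ε(t)) for all t. If Tr[ρ_ε(t) * P] = Tr[ρ_q(t) * P] for all t ∈ ℝ, then for every t the function t ↦ Tr[ρ_q(t) * P] is differentiable with derivative Tr[ρ_ε(t) * (i • (H * P − P * H))], i.e. the quasi-equilibrium average of P evolves according to the Heisenberg time derivative of P averaged over ρ_ε. -/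
open Matrix NormedSpace

attribute [local instance] Matrix.linftyOpNormedRing Matrix.linftyOpNormedAlgebra

theorem Matrix.trace_commutator_mul {n R : Type*} [Fintype n] [CommRing R]
    (A B C : Matrix n n R) :
    trace ((A * B - B * A) * C) = -trace (B * (A * C - C * A)) := by
  rw [sub_mul, mul_sub, trace_sub, trace_sub, Matrix.mul_assoc, trace_mul_comm A,
    Matrix.mul_assoc, Matrix.mul_assoc, neg_sub]

section

attribute [local instance] Matrix.linftyOpNormedAddCommGroup Matrix.linftyOpNormedSpace

theorem HasDerivAt.trace {𝕜 R n : Type*} [NontriviallyNormedField 𝕜] [CompleteSpace 𝕜]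
    [NormedAddCommGroup R] [NormedSpace 𝕜 R] [FiniteDimensional 𝕜 R] [Fintype n]
    {f : 𝕜 → Matrix n n R} {f' : Matrix n n R} {x : 𝕜} (hf : HasDerivAt f f' x) :
    HasDerivAt (fun s => (f s).trace) f'.trace x :=
  (traceLinearMap n 𝕜 R).toContinuousLinearMap.hasFDerivAt.comp_hasDerivAt x hf

end

theorem differential_balance_of_self_consistency_general
    {n : Type*} [Fintype n] [DecidableEq n]
    (H P : Matrix n n ℂ)
    (ε : ℝ)
    (ρε ρq : ℝ → Matrix n n ℂ) (ρε' : ℝ → Matrix n n ℂ)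
    (hderiv : ∀ t : ℝ, HasDerivAt ρε (ρε' t) t)
    (hode : ∀ t : ℝ, ρε' t + Complex.I • (H * ρε t - ρε t * H) =
      ε • (ρq t - ρε t))
    (hbal : ∀ t : ℝ, trace (ρε t * P) = trace (ρq t * P)) :
    ∀ t : ℝ, HasDerivAt (fun s : ℝ => trace (ρq s * P))
      (trace (ρε t * (Complex.I • (H * P - P * H)))) t := by
  intro t
  have hρε' : ρε' t = ε • (ρq t - ρε t) - Complex.I • (H * ρε t - ρε t * H) :=
    eq_sub_of_add_eq (hode t)
  -- the relaxation term `ε (ρq - ρε)` is invisible to `P` by the balance condition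
  have hval : trace (ρε' t * P) = trace (ρε t * (Complex.I • (H * P - P * H))) := by
    rw [hρε', sub_mul, trace_sub, smul_mul_assoc, trace_smul, sub_mul, trace_sub, hbal t,
      sub_self, smul_zero, zero_sub, smul_mul_assoc, trace_smul, trace_commutator_mul,
      Matrix.mul_smul, trace_smul, smul_neg, neg_neg]
  rw [show (fun s => trace (ρq s * P)) = fun s => trace (ρε s * P) from
    funext fun s => (hbal s).symm, ← hval]
  exact ((hderiv t).mul_const P).trace

/-- In NESOM-2 with a constant Hamiltonian, the differential balance equations follow
from the self-consistency balance equations: if `Tr[ρ_ε P] = Tr[ρ_q P]` at all times,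
then `d/dt Tr[ρ_q P] = Tr[ρ_ε · i[H, P]]`. -/
theorem differential_balance_of_self_consistency
    {n : Type*} [Fintype n] [DecidableEq n] [Nonempty n]
    (H P : Matrix n n ℂ) (hH : Hᴴ = H) (hP : Pᴴ = P)
    (ε : ℝ) (hε : 0 < ε)
    (ρε ρq : ℝ → Matrix n n ℂ) (ρε' : ℝ → Matrix n n ℂ)
    (hderiv : ∀ t : ℝ, HasDerivAt ρε (ρε' t) t)
    (hode : ∀ t : ℝ, ρε' t + Complex.I • (H * ρε t - ρε t * H) =
      ε • (ρq t - ρε t))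
    (hbal : ∀ t : ℝ, trace (ρε t * P) = trace (ρq t * P)) :
    ∀ t : ℝ, HasDerivAt (fun s : ℝ => trace (ρq s * P))
      (trace (ρε t * (Complex.I • (H * P - P * H)))) t :=
  differential_balance_of_self_consistency_general H P ε ρε ρq ρε' hderiv hode hbal
end

section
/- Positive-definiteness of the Kubo–Duhamel auto-correlator: for any Hermitian n×n complex matrix S and any n×n complex matrix A, the integral ∫₀¹ Tr[exp(−(1−λ) • S) * A * exp(−λ • S) * Aᴴ] dλ is a nonnegative real number, and it equals 0 if and only if A = 0. -/
/-!
Halving the exponents, `exp (-(s • S)) = E * E` and `exp (-(t • S)) = F * F` with `E`, `F`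
Hermitian, so by cyclicity the integrand is `Tr[B * Bᴴ]` for `B = E * A * F`: a nonnegative
real number (in the order of `ℂ`), vanishing only when `B = 0`, i.e. `A = 0` because
exponentials are invertible. A continuous integrand that is positive at every point has a
positive integral.
-/

open Matrix NormedSpace intervalIntegral

open scoped ComplexOrder

namespace RCLike

variable {𝕜 : Type*} [RCLike 𝕜] {f : ℝ → 𝕜} {a b : ℝ}

theorem intervalIntegral_eq_ofReal_integral_re (hf : ∀ x, 0 ≤ f x) :
    ∫ x in a..b, f x = ((∫ x in a..b, re (f x) : ℝ) : 𝕜) := by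
  rw [← intervalIntegral_ofReal]
  congr with x
  obtain ⟨r, -, hr⟩ := nonneg_iff_exists_ofReal.mp (hf x)
  rw [← hr, ofReal_re]

theorem intervalIntegral_nonneg_of_nonneg (hab : a ≤ b) (hf : ∀ x, 0 ≤ f x) :
    0 ≤ ∫ x in a..b, f x := by
  rw [intervalIntegral_eq_ofReal_integral_re hf, ofReal_nonneg]
  exact integral_nonneg hab fun x _ => (nonneg_iff.mp (hf x)).1

theorem intervalIntegral_pos_of_pos (hab : a < b) (hcont : Continuous f) (hf : ∀ x, 0 < f x) :
    0 < ∫ x in a..b, f x := by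
  rw [intervalIntegral_eq_ofReal_integral_re fun x => (hf x).le, ofReal_pos]
  exact intervalIntegral.intervalIntegral_pos_of_pos
    ((continuous_re.comp hcont).intervalIntegrable a b) (fun x => (pos_iff.mp (hf x)).1) hab

end RCLike

namespace Matrix

variable {n 𝕜 : Type*} [Fintype n] [RCLike 𝕜]

theorem trace_mul_self_mul_mul_self_mul_conjTranspose {R : Type*} [CommSemiring R] [StarRing R]
    {X Y : Matrix n n R} (hX : X.IsHermitian) (hY : Y.IsHermitian) (A : Matrix n n R) :
    trace (X * X * A * (Y * Y) * Aᴴ) = trace (X * A * Y * (X * A * Y)ᴴ) := by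
  rw [conjTranspose_mul, conjTranspose_mul, hX.eq, hY.eq]
  calc _ = trace (X * (X * A * (Y * Y) * Aᴴ)) := by simp only [Matrix.mul_assoc]
    _ = trace (X * A * (Y * Y) * Aᴴ * X) := trace_mul_comm _ _
    _ = _ := by simp only [Matrix.mul_assoc]

variable [DecidableEq n]

@[fun_prop]
theorem continuous_exp : Continuous (exp : Matrix n n 𝕜 → Matrix n n 𝕜) :=
  open scoped Norms.Operator in exp_continuous

theorem exp_neg_smul_eq_mul_self (S : Matrix n n 𝕜) (t : ℝ) :
    exp (-(t • S)) = exp (-((t / 2) • S)) * exp (-((t / 2) • S)) := by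
  rw [← sq, ← exp_nsmul, two_nsmul, ← neg_add, ← add_smul, add_halves]

theorem isHermitian_exp_neg_real_smul {S : Matrix n n 𝕜} (hS : S.IsHermitian) (t : ℝ) :
    (exp (-(t • S))).IsHermitian :=
  (hS.smul (IsSelfAdjoint.all t)).neg.exp

variable {S : Matrix n n 𝕜}

theorem trace_exp_mul_exp_mul_conjTranspose_eq (hS : S.IsHermitian) (A : Matrix n n 𝕜)
    (s t : ℝ) :
    trace (exp (-(s • S)) * A * exp (-(t • S)) * Aᴴ) =
      trace (exp (-((s / 2) • S)) * A * exp (-((t / 2) • S)) *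
        (exp (-((s / 2) • S)) * A * exp (-((t / 2) • S)))ᴴ) := by
  rw [exp_neg_smul_eq_mul_self S s, exp_neg_smul_eq_mul_self S t]
  exact trace_mul_self_mul_mul_self_mul_conjTranspose (isHermitian_exp_neg_real_smul hS _)
    (isHermitian_exp_neg_real_smul hS _) A

theorem trace_exp_mul_exp_mul_conjTranspose_nonneg (hS : S.IsHermitian)
    (A : Matrix n n 𝕜) (s t : ℝ) :
    0 ≤ trace (exp (-(s • S)) * A * exp (-(t • S)) * Aᴴ) := by
  rw [trace_exp_mul_exp_mul_conjTranspose_eq hS]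
  exact (posSemidef_self_mul_conjTranspose _).trace_nonneg

theorem trace_exp_mul_exp_mul_conjTranspose_eq_zero_iff (hS : S.IsHermitian)
    {A : Matrix n n 𝕜} (s t : ℝ) :
    trace (exp (-(s • S)) * A * exp (-(t • S)) * Aᴴ) = 0 ↔ A = 0 := by
  rw [trace_exp_mul_exp_mul_conjTranspose_eq hS, trace_mul_conjTranspose_self_eq_zero_iff,
    (isUnit_exp _).mul_left_eq_zero, (isUnit_exp _).mul_right_eq_zero]

end Matrix

theorem kubo_duhamel_autocorrelator_pos_def_general
    {n : Type*} [Fintype n] [DecidableEq n]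
    (S : Matrix n n ℂ) (hS : Sᴴ = S) (A : Matrix n n ℂ) :
    (∫ lam in (0:ℝ)..1,
        trace (exp (-((1 - lam) • S)) * A * exp (-(lam • S)) * Aᴴ)).im = 0 ∧
    0 ≤ (∫ lam in (0:ℝ)..1,
        trace (exp (-((1 - lam) • S)) * A * exp (-(lam • S)) * Aᴴ)).re ∧
    ((∫ lam in (0:ℝ)..1,
        trace (exp (-((1 - lam) • S)) * A * exp (-(lam • S)) * Aᴴ)) = 0 ↔
      A = 0) := by
  have hcont : Continuous fun lam : ℝ =>
      trace (exp (-((1 - lam) • S)) * A * exp (-(lam • S)) * Aᴴ) := by fun_prop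
  obtain ⟨hre, him⟩ := Complex.nonneg_iff.mp <|
    RCLike.intervalIntegral_nonneg_of_nonneg zero_le_one fun lam =>
      trace_exp_mul_exp_mul_conjTranspose_nonneg hS A (1 - lam) lam
  refine ⟨him.symm, hre, fun h => ?_, fun hA => by simp [hA]⟩
  by_contra hA
  refine (RCLike.intervalIntegral_pos_of_pos zero_lt_one hcont fun lam => ?_).ne' h
  exact (trace_exp_mul_exp_mul_conjTranspose_nonneg hS A _ _).lt_of_ne'
    ((trace_exp_mul_exp_mul_conjTranspose_eq_zero_iff hS _ _).not.mpr hA)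

/-- Positive-definiteness of the Kubo–Duhamel auto-correlator: it is a nonnegative
real number, vanishing exactly when `A = 0`. -/
theorem kubo_duhamel_autocorrelator_pos_def
    {n : Type*} [Fintype n] [DecidableEq n] [Nonempty n]
    (S : Matrix n n ℂ) (hS : Sᴴ = S) (A : Matrix n n ℂ) :
    (∫ lam in (0:ℝ)..1,
        trace (exp (-((1 - lam) • S)) * A * exp (-(lam • S)) * Aᴴ)).im = 0 ∧
    0 ≤ (∫ lam in (0:ℝ)..1,
        trace (exp (-((1 - lam) • S)) * A * exp (-(lam • S)) * Aᴴ)).re ∧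
    ((∫ lam in (0:ℝ)..1,
        trace (exp (-((1 - lam) • S)) * A * exp (-(lam • S)) * Aᴴ)) = 0 ↔
      A = 0) :=
  kubo_duhamel_autocorrelator_pos_def_general S hS A
end

section
/- Second derivative of the log-partition function equals the Kubo–Duhamel variance: let S and P be Hermitian n×n complex matrices; set Z = Tr[exp(−S)] (a positive real), ⟨P⟩ = Tr[exp(−S) * P] / Z (a real number), and ΔP = P − ⟨P⟩ • 1. Then the function g(x) = ln Tr[exp(−(S + x • P))] is twice differentiable at 0 and g''(0) = Z⁻¹ · ∫₀¹ Tr[exp(−(1−λ) • S) * ΔP * exp(−λ • S) * ΔP] dλ, which is a nonnegative real number. -/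
open Matrix NormedSpace intervalIntegral
open scoped ComplexOrder

/-!
Duhamel's formula `exp (A + B) - exp A = ∫₀¹ exp ((1 - s) (A + B)) B exp (s A) ds` makes
`x ↦ exp (A + x B)` differentiable, and after taking traces
`d/dx Tr (exp (-(S + x P)) C) = -(P·C)_{S + x P}` in terms of the Kubo–Duhamel correlator.
For `C = 1` cyclicity of the trace collapses the correlator to `Tr (exp (-(S + x P)) P)`, so
`g' = -⟨P⟩` along the path, and differentiating once more at `0` gives
`g''(0) = (P·P)_S / Z - ⟨P⟩²`, which is `(ΔP·ΔP)_S / Z` by expanding `ΔP = P - ⟨P⟩`.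
Nonnegativity comes from splitting the exponentials into Hermitian square roots `U², V²`:
`Tr (U² ΔP V² ΔP) = Tr ((V ΔP U)ᴴ (V ΔP U)) ≥ 0`.
-/

theorem hasDerivAt_of_sub_eq_smul {E : Type*} [NormedAddCommGroup E] [NormedSpace ℝ E]
    {f g : ℝ → E} {x₀ : ℝ} (hfg : ∀ x, f x - f x₀ = (x - x₀) • g x) (hg : ContinuousAt g x₀) :
    HasDerivAt f (g x₀) x₀ := by
  refine hasDerivAt_iff_tendsto_slope.2 <| hg.tendsto.mono_left nhdsWithin_le_nhds |>.congr' ?_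
  filter_upwards [self_mem_nhdsWithin] with x hx
  rw [slope_def_module, hfg, smul_smul, inv_mul_cancel₀ (sub_ne_zero.2 hx), one_smul]

section BanachAlgebra

variable {𝔸 : Type*} [NormedRing 𝔸] [NormedAlgebra ℚ 𝔸] [NormedAlgebra ℝ 𝔸] [CompleteSpace 𝔸]

theorem exp_add_sub_exp_eq_integral (A B : 𝔸) :
    exp (A + B) - exp A = ∫ s in (0:ℝ)..1, exp ((1 - s) • (A + B)) * B * exp (s • A) := by
  have hderiv (s : ℝ) : HasDerivAt (fun u : ℝ => -(exp ((1 - u) • (A + B)) * exp (u • A)))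
      (exp ((1 - s) • (A + B)) * B * exp (s • A)) s := by
    have h₁ : HasDerivAt (fun u : ℝ => exp ((1 - u) • (A + B)))
        ((-1 : ℝ) • (exp ((1 - s) • (A + B)) * (A + B))) s :=
      (hasDerivAt_exp_smul_const (A + B) (1 - s)).scomp s ((hasDerivAt_id s).const_sub 1)
    refine (h₁.mul (hasDerivAt_exp_smul_const' A s)).neg.congr_deriv ?_
    rw [neg_one_smul]
    noncomm_ring
  have hcont : Continuous fun s : ℝ => exp ((1 - s) • (A + B)) * B * exp (s • A) := by
    fun_prop
  rw [integral_eq_sub_of_hasDerivAt (fun s _ => hderiv s) (hcont.intervalIntegrable 0 1)]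
  simp only [sub_zero, sub_self, one_smul, zero_smul, exp_zero, mul_one, one_mul]
  abel

theorem hasDerivAt_exp_add_smul (A B : 𝔸) (x₀ : ℝ) :
    HasDerivAt (fun x : ℝ => exp (A + x • B))
      (∫ s in (0:ℝ)..1, exp ((1 - s) • (A + x₀ • B)) * B * exp (s • (A + x₀ • B))) x₀ := by
  let M := A + x₀ • B
  refine hasDerivAt_of_sub_eq_smul
    (g := fun x => ∫ s in (0:ℝ)..1, exp ((1 - s) • (A + x • B)) * B * exp (s • M)) (fun x => ?_)
    (continuous_parametric_intervalIntegral_of_continuous' (by fun_prop) 0 1).continuousAt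
  have hM : A + x • B = M + (x - x₀) • B := by
    simp only [M, sub_smul]; abel
  rw [hM, exp_add_sub_exp_eq_integral, ← integral_smul]
  congr 1 with s
  rw [mul_smul_comm, smul_mul_assoc]

end BanachAlgebra

theorem HasDerivAt.re {f : ℝ → ℂ} {f' : ℂ} {x : ℝ} (h : HasDerivAt f f' x) :
    HasDerivAt (fun y => (f y).re) f'.re x :=
  Complex.reCLM.hasFDerivAt.comp_hasDerivAt x h

theorem hasDerivAt_deriv_log {f f' : ℝ → ℝ} {f'' x₀ : ℝ} (hf : ∀ x, HasDerivAt f (f' x) x)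
    (hf₀ : ∀ x, f x ≠ 0) (hf' : HasDerivAt f' f'' x₀) :
    HasDerivAt (deriv fun x => Real.log (f x)) ((f'' * f x₀ - f' x₀ ^ 2) / f x₀ ^ 2) x₀ := by
  have hlog : deriv (fun x => Real.log (f x)) = fun x => f' x / f x :=
    funext fun x => ((hf x).log (hf₀ x)).deriv
  rw [hlog, sq (f' x₀)]
  exact hf'.div (hf x₀) (hf₀ x₀)

section Matrix

variable {n : Type*} [Fintype n] [DecidableEq n]

theorem Matrix.exp_smul_mul_exp_smul (s t : ℝ) (A : Matrix n n ℂ) :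
    exp (s • A) * exp (t • A) = exp ((s + t) • A) := by
  rw [add_smul, exp_add_of_commute _ _ (((Commute.refl A).smul_left s).smul_right t)]

theorem Matrix.exp_neg_smul_mul_exp_neg_one_sub_smul (lam : ℝ) (S : Matrix n n ℂ) :
    exp (-(lam • S)) * exp (-((1 - lam) • S)) = exp (-S) := by
  rw [← smul_neg, ← smul_neg, exp_smul_mul_exp_smul, add_sub_cancel, one_smul]

theorem Matrix.exp_neg_one_sub_smul_mul_exp_neg_smul (lam : ℝ) (S : Matrix n n ℂ) :
    exp (-((1 - lam) • S)) * exp (-(lam • S)) = exp (-S) := by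
  rw [← smul_neg, ← smul_neg, exp_smul_mul_exp_smul, sub_add_cancel, one_smul]

theorem Matrix.exp_half_smul_mul_self (t : ℝ) (A : Matrix n n ℂ) :
    exp ((t / 2) • A) * exp ((t / 2) • A) = exp (t • A) := by
  rw [exp_smul_mul_exp_smul, add_halves]

theorem Matrix.posDef_exp {A : Matrix n n ℂ} (hA : A.IsHermitian) :
    (exp A).PosDef := by
  have hN := (hA.smul (IsSelfAdjoint.all (1 / 2 : ℝ))).exp
  have h : exp A = (exp ((1 / 2 : ℝ) • A))ᴴ * exp ((1 / 2 : ℝ) • A) := by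
    rw [hN.eq, exp_half_smul_mul_self, one_smul]
  rw [h]
  exact PosDef.conjTranspose_mul_self _ (mulVec_injective_iff_isUnit.2 (isUnit_exp _))

theorem Matrix.re_trace_exp_pos [Nonempty n] {A : Matrix n n ℂ} (hA : A.IsHermitian) :
    0 < (trace (exp A)).re :=
  (Complex.pos_iff.1 (posDef_exp hA).trace_pos).1

theorem Matrix.trace_exp_smul_mul_exp_smul_mul_nonneg {H Q : Matrix n n ℂ}
    (hH : H.IsHermitian) (hQ : Q.IsHermitian) (s t : ℝ) :
    0 ≤ trace (exp (s • H) * Q * exp (t • H) * Q) := by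
  set U := exp ((s / 2) • H)
  set V := exp ((t / 2) • H)
  have hU : Uᴴ = U := (hH.smul (IsSelfAdjoint.all (s / 2))).exp
  have hV : Vᴴ = V := (hH.smul (IsSelfAdjoint.all (t / 2))).exp
  have h : trace (exp (s • H) * Q * exp (t • H) * Q) = trace ((V * Q * U)ᴴ * (V * Q * U)) := by
    rw [← exp_half_smul_mul_self s, ← exp_half_smul_mul_self t,
      show U * U * Q * (V * V) * Q = U * (U * Q * (V * V) * Q) by noncomm_ring,
      trace_mul_comm U]
    simp only [conjTranspose_mul, hU, hV, hQ.eq]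
    noncomm_ring
  rw [h]
  exact (posSemidef_conjTranspose_mul_self _).trace_nonneg

end Matrix

section KuboDuhamel

variable {n : Type*} [Fintype n] [DecidableEq n]

noncomputable def kuboDuhamel (S A B : Matrix n n ℂ) : ℂ :=
  ∫ lam in (0:ℝ)..1, trace (exp (-((1 - lam) • S)) * A * exp (-(lam • S)) * B)

attribute [local instance] Matrix.linftyOpNormedRing Matrix.linftyOpNormedAlgebra

theorem kuboDuhamel_one_right (S A : Matrix n n ℂ) :
    kuboDuhamel S A 1 = trace (exp (-S) * A) := by
  have h (lam : ℝ) : trace (exp (-((1 - lam) • S)) * A * exp (-(lam • S)))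
      = trace (exp (-S) * A) := by
    rw [trace_mul_cycle, exp_neg_smul_mul_exp_neg_one_sub_smul]
  simp [kuboDuhamel, h]

theorem kuboDuhamel_self_nonneg {S A : Matrix n n ℂ} (hS : S.IsHermitian) (hA : A.IsHermitian) :
    0 ≤ kuboDuhamel S A A := by
  rw [kuboDuhamel, integral_of_le zero_le_one]
  refine MeasureTheory.integral_nonneg fun lam => ?_
  rw [← smul_neg, ← smul_neg]
  exact trace_exp_smul_mul_exp_smul_mul_nonneg hS.neg hA _ _

theorem kuboDuhamel_sub_smul_one (S A : Matrix n n ℂ) (c : ℝ) :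
    kuboDuhamel S (A - c • 1) (A - c • 1)
      = kuboDuhamel S A A - (2 * c) • trace (exp (-S) * A) + c ^ 2 • trace (exp (-S)) := by
  have h (lam : ℝ) :
      trace (exp (-((1 - lam) • S)) * (A - c • 1) * exp (-(lam • S)) * (A - c • 1))
        = trace (exp (-((1 - lam) • S)) * A * exp (-(lam • S)) * A)
          - ((2 * c) • trace (exp (-S) * A) - c ^ 2 • trace (exp (-S))) := by
    set X := exp (-((1 - lam) • S))
    set Y := exp (-(lam • S))
    have hXY : X * Y = exp (-S) := exp_neg_one_sub_smul_mul_exp_neg_smul lam S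
    have hYX : Y * X = exp (-S) := exp_neg_smul_mul_exp_neg_one_sub_smul lam S
    have hexpand : X * (A - c • 1) * Y * (A - c • 1)
        = X * A * Y * A - c • (X * A * Y) - c • (X * Y * A) + (c ^ 2) • (X * Y) := by
      simp only [Matrix.mul_sub, Matrix.sub_mul, mul_smul_comm, smul_mul_assoc, Matrix.mul_one]
      module
    rw [hexpand, trace_add, trace_sub, trace_sub, trace_smul, trace_smul, trace_smul,
      trace_mul_cycle X A Y, hXY, hYX]
    module
  have hcont : Continuous fun lam : ℝ =>
      trace (exp (-((1 - lam) • S)) * A * exp (-(lam • S)) * A) := by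
    fun_prop
  simp only [kuboDuhamel, h]
  rw [integral_sub (hcont.intervalIntegrable 0 1) intervalIntegrable_const]
  simp only [integral_const, sub_zero, one_smul]
  abel

theorem hasDerivAt_exp_neg_add_smul (S P : Matrix n n ℂ) (x₀ : ℝ) :
    HasDerivAt (fun x : ℝ => exp (-(S + x • P)))
      (-∫ s in (0:ℝ)..1, exp (-((1 - s) • (S + x₀ • P))) * P * exp (-(s • (S + x₀ • P)))) x₀ := by
  have h := hasDerivAt_exp_add_smul (-S) (-P) x₀
  simp only [smul_neg, ← neg_add, mul_neg, neg_mul, integral_neg] at h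
  exact h

theorem hasDerivAt_trace_exp_neg_add_smul_mul (S P C : Matrix n n ℂ) (x₀ : ℝ) :
    HasDerivAt (fun x : ℝ => trace (exp (-(S + x • P)) * C))
      (-kuboDuhamel (S + x₀ • P) P C) x₀ := by
  let L : Matrix n n ℂ →L[ℝ] ℂ := LinearMap.toContinuousLinearMap
    (((traceLinearMap n ℂ ℂ).comp (LinearMap.mulRight ℂ C)).restrictScalars ℝ)
  have hcont : Continuous fun s : ℝ =>
      exp (-((1 - s) • (S + x₀ • P))) * P * exp (-(s • (S + x₀ • P))) := by
    fun_prop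
  have h := L.hasFDerivAt.comp_hasDerivAt x₀ (hasDerivAt_exp_neg_add_smul S P x₀)
  exact h.congr_deriv <| (L.map_neg _).trans <|
    congrArg Neg.neg (L.intervalIntegral_comp_comm (hcont.intervalIntegrable 0 1)).symm

end KuboDuhamel

/-- The second derivative of the log-partition function `g x = ln Tr exp (-(S + x • P))`
at `0` equals the (nonnegative) Kubo–Duhamel variance of the fluctuation
`ΔP = P - ⟨P⟩ • 1`. -/
theorem second_deriv_log_partition_eq_kubo_duhamel_variance
    {n : Type*} [Fintype n] [DecidableEq n] [Nonempty n]
    (S P : Matrix n n ℂ) (hS : Sᴴ = S) (hP : Pᴴ = P)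
    (Z : ℝ) (hZ : Z = (trace (exp (-S))).re)
    (avg : ℝ) (havg : avg = (trace (exp (-S) * P)).re / Z)
    (ΔP : Matrix n n ℂ) (hΔP : ΔP = P - avg • (1 : Matrix n n ℂ))
    (g : ℝ → ℝ) (hg : g = fun x : ℝ => Real.log (trace (exp (-(S + x • P)))).re)
    (K : ℂ) (hK : K = ∫ lam in (0:ℝ)..1,
      trace (exp (-((1 - lam) • S)) * ΔP * exp (-(lam • S)) * ΔP)) :
    (∀ x : ℝ, DifferentiableAt ℝ g x) ∧
    K.im = 0 ∧
    HasDerivAt (deriv g) (Z⁻¹ * K.re) 0 ∧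
    0 ≤ Z⁻¹ * K.re := by
  have hS : S.IsHermitian := hS
  have hP : P.IsHermitian := hP
  set f : ℝ → ℝ := fun x => (trace (exp (-(S + x • P)))).re
  set φ : ℝ → ℝ := fun x => (trace (exp (-(S + x • P)) * P)).re
  have hf (x : ℝ) : HasDerivAt f (-φ x) x := by
    simpa only [Matrix.mul_one, kuboDuhamel_one_right, Complex.neg_re] using
      (hasDerivAt_trace_exp_neg_add_smul_mul S P 1 x).re
  have hφ : HasDerivAt φ (-(kuboDuhamel S P P).re) 0 := by
    simpa only [zero_smul, add_zero, Complex.neg_re] using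
      (hasDerivAt_trace_exp_neg_add_smul_mul S P P 0).re
  have hf_pos (x : ℝ) : 0 < f x := re_trace_exp_pos (hS.add (hP.smul (IsSelfAdjoint.all x))).neg
  have hf₀ : f 0 = Z := by simp [f, hZ]
  have hZ_pos : 0 < Z := hf₀ ▸ hf_pos 0
  have htrace_P : (trace (exp (-S) * P)).re = avg * Z := by
    rw [havg, div_mul_cancel₀ _ hZ_pos.ne']
  have hφ₀ : φ 0 = avg * Z := by simpa [φ] using htrace_P
  have hΔP_herm : ΔP.IsHermitian := hΔP ▸ hP.sub (isHermitian_one.smul (IsSelfAdjoint.all avg))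
  have hK_nonneg : 0 ≤ K := hK ▸ kuboDuhamel_self_nonneg hS hΔP_herm
  have hK_re : K.re = (kuboDuhamel S P P).re - avg ^ 2 * Z := by
    rw [hK, ← kuboDuhamel, hΔP, kuboDuhamel_sub_smul_one, Complex.add_re, Complex.sub_re,
      Complex.smul_re, Complex.smul_re, htrace_P, ← hZ, smul_eq_mul, smul_eq_mul]
    ring
  refine ⟨fun x => hg ▸ ((hf x).log (hf_pos x).ne').differentiableAt,
    (Complex.nonneg_iff.1 hK_nonneg).2.symm, ?_,
    mul_nonneg (inv_nonneg.2 hZ_pos.le) (Complex.nonneg_iff.1 hK_nonneg).1⟩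
  refine hg ▸ (hasDerivAt_deriv_log hf (fun x => (hf_pos x).ne') hφ.neg).congr_deriv ?_
  rw [hf₀, hφ₀, hK_re]
  field_simp
end
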